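/- arXiv:2605.21819 — 12 statements merged into one kernel-verified Lean document; each statement's English description precedes it below -/
import Mathlib

section
/- For any integers n ≥ 1 and m ≥ 0, the m-th derivative of the n-th Chebyshev polynomial at 1 satisfies T_n^{(m)}(1) = ∏_{j=0}^{m-1} (n^2 - j^2)/(2j+1). -/
open Polynomial Polynomial.Chebyshev


lemma T_eval_one' (n : ℤ) : (T ℚ n).eval 1 = 1 := by
  induction n using Polynomial.Chebyshev.induct with
  | zero => simp
  | one => simp
  | add_two n h1 h2 => rw [T_add_two]; simp [h1, h2]; ring
  | neg_add_one n h1 h2 =>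
      rw [T_sub_one]; simp only [eval_sub, eval_mul, eval_ofNat, eval_X, h1, h2, neg_add_cancel,
        T_zero, eval_one]; ring

lemma T_ode (n : ℤ) : (1 - X^2) * derivative (derivative (T ℚ n)) =
    X * derivative (T ℚ n) - (n : ℚ[X])^2 * T ℚ n := by
  have h1 := one_sub_X_sq_mul_derivative_T_eq_poly_in_T (R := ℚ) (n - 1)
  simp only [sub_add_cancel] at h1
  have h2 := congrArg derivative h1
  simp only [derivative_mul, derivative_sub, derivative_one, derivative_X_pow, derivative_X,
    derivative_intCast] at h2
  push_cast at h2
  rw [show (n:ℚ[X]) - 1 + 1 = (n:ℚ[X]) by ring] at h2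
  simp only [derivative_intCast, zero_mul, zero_add, zero_sub, map_ofNat] at h2
  have hb := T_derivative_eq_U (R := ℚ) n
  have hc := T_derivative_eq_U (R := ℚ) (n - 1)
  have h3 := T_eq_U_sub_X_mul_U ℚ n
  have h4 := U_sub_two ℚ n
  push_cast at hb hc
  rw [show n - 1 - 1 = n - 2 by ring] at hc
  linear_combination h2 + (1 - (n:ℚ[X])) * X * hb + (n:ℚ[X]) * hc
    + (n:ℚ[X]) * ((n:ℚ[X]) - 1) * h3 + (n:ℚ[X]) * ((n:ℚ[X]) - 1) * h4

lemma T_ode_iter (n : ℤ) (m : ℕ) :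
    (1 - X^2) * derivative^[m+2] (T ℚ n) =
      (2*(m:ℚ[X])+1) * X * derivative^[m+1] (T ℚ n)
        - ((n:ℚ[X])^2 - (m:ℚ[X])^2) * derivative^[m] (T ℚ n) := by
  induction m with
  | zero => simpa using T_ode n
  | succ m ih =>
      have h2 := congrArg derivative ih
      simp only [derivative_mul, derivative_sub, derivative_one, derivative_X_pow,
        derivative_X, derivative_natCast, derivative_add, derivative_ofNat, derivative_pow,
        ← Function.iterate_succ_apply' Polynomial.derivative] at h2
      push_cast
      push_cast at h2
      simp only [derivative_intCast, map_ofNat, mul_zero, zero_mul, mul_one, sub_zero] at h2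
      linear_combination h2

lemma T_rec (n : ℤ) (m : ℕ) :
    (derivative^[m+1] (T ℚ n)).eval 1 =
      (((n:ℚ)^2 - (m:ℚ)^2) / (2*(m:ℚ)+1)) * (derivative^[m] (T ℚ n)).eval 1 := by
  have h := congrArg (Polynomial.eval (1:ℚ)) (T_ode_iter n m)
  simp only [eval_mul, eval_sub, eval_add, eval_one, eval_pow, eval_X, eval_natCast,
    eval_intCast, eval_ofNat] at h
  simp only [Function.iterate_succ_apply] at h ⊢
  have h21 : (2*(m:ℚ)+1) ≠ 0 := by positivity
  field_simp
  linear_combination -h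


/-- For `n ≥ 1` and `m ≥ 0`, the `m`-th derivative of the `n`-th Chebyshev polynomial of the
first kind at `1` satisfies `T_n^{(m)}(1) = ∏_{j=0}^{m-1} (n² - j²) / (2j + 1)` (in `ℚ`);
the empty product is `1`, so in particular `T_n(1) = 1`. -/
theorem chebyshev_iterated_deriv_eval_one (n m : ℕ) (hn : 1 ≤ n) :
    ((Polynomial.derivative)^[m] (T ℚ n)).eval 1 =
      ∏ j ∈ Finset.range m, (((n : ℚ) ^ 2 - (j : ℚ) ^ 2) / (2 * (j : ℚ) + 1)) := by
  induction m with
  | zero => simpa using T_eval_one' n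
  | succ m ih =>
      rw [Finset.prod_range_succ, ← ih, T_rec]
      push_cast
      ring
end

section
/- Let n ≥ 2 be an odd integer and w = max(ν_2(n-1), ν_2(n+1)). Then for every m ≥ 2, the m-th derivative of T_n satisfies 2^{w + ⌊m/2⌋} divides T_n^{(m)}(1). -/
open Polynomial Polynomial.Chebyshev

lemma cheb_eval_one (k : ℤ) : (T ℤ k).eval 1 = 1 := by
  induction k using Polynomial.Chebyshev.induct with
  | zero => simp
  | one => simp
  | add_two k ih1 ih2 =>
      have h : eval 1 (T ℤ ((k:ℤ) + 2)) =
          2 * 1 * eval 1 (T ℤ ((k:ℤ) + 1)) - eval 1 (T ℤ (k:ℤ)) := by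
        rw [T_add_two]; simp
      rw [h, ih1, ih2]; ring
  | neg_add_one k ih1 ih2 =>
      have h : eval 1 (T ℤ (-(k:ℤ) - 1)) =
          2 * 1 * eval 1 (T ℤ (-(k:ℤ))) - eval 1 (T ℤ (-(k:ℤ) + 1)) := by
        rw [T_sub_one]; simp
      rw [h, ih1, ih2]; ring

lemma cheb_ode (n : ℤ) :
    (1 - X ^ 2) * derivative (derivative (T ℤ n))
      - X * derivative (T ℤ n) + (n : ℤ[X]) ^ 2 * T ℤ n = 0 := by
  have h1 : derivative (T ℤ n) = (n : ℤ[X]) * U ℤ (n - 1) := by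
    simpa using T_derivative_eq_U (R := ℤ) n
  have h2 : derivative (derivative (T ℤ n)) = (n : ℤ[X]) * derivative (U ℤ (n - 1)) := by
    rw [h1]; simp
  have h3 := add_one_mul_T_eq_poly_in_U (R := ℤ) (n - 1)
  rw [h2, h1]
  push_cast at h3 ⊢
  linear_combination (norm := ring_nf) (n : ℤ[X]) * h3

lemma cheb_rec (n : ℤ) (m : ℕ) :
    (1 - X ^ 2) * derivative^[m + 2] (T ℤ n)
      - (2 * (m : ℤ[X]) + 1) * X * derivative^[m + 1] (T ℤ n)
      + ((n : ℤ[X]) ^ 2 - (m : ℤ[X]) ^ 2) * derivative^[m] (T ℤ n) = 0 := by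
  induction m with
  | zero => simpa using cheb_ode n
  | succ m ih =>
      have e1 : derivative^[m + 1] (T ℤ n) = derivative (derivative^[m] (T ℤ n)) :=
        Function.iterate_succ_apply' _ _ _
      have e2 : derivative^[m + 2] (T ℤ n)
          = derivative (derivative (derivative^[m] (T ℤ n))) := by
        rw [show m + 2 = (m + 1) + 1 from rfl, Function.iterate_succ_apply', e1]
      have e3 : derivative^[m + 3] (T ℤ n)
          = derivative (derivative (derivative (derivative^[m] (T ℤ n)))) := by
        rw [show m + 3 = (m + 2) + 1 from rfl, Function.iterate_succ_apply', e2]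
      rw [e2, e1] at ih
      have h := congr_arg derivative ih
      simp only [derivative_add, derivative_sub, derivative_mul, derivative_one,
        derivative_X_pow, derivative_X, map_zero, derivative_pow, derivative_natCast,
        derivative_intCast, derivative_ofNat, C_eq_natCast, Nat.cast_ofNat, pow_one,
        map_ofNat] at h
      rw [show m + 1 + 2 = m + 3 from rfl, e3, show m + 1 + 1 = m + 2 from rfl, e2, e1]
      push_cast at h ⊢
      linear_combination (norm := ring_nf) h

lemma cheb_eval_rec (n : ℤ) (m : ℕ) :
    (2 * (m : ℤ) + 1) * (derivative^[m + 1] (T ℤ n)).eval 1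
      = (n ^ 2 - (m : ℤ) ^ 2) * (derivative^[m] (T ℤ n)).eval 1 := by
  have h := congr_arg (Polynomial.eval (1 : ℤ)) (cheb_rec n m)
  simp only [eval_add, eval_sub, eval_mul, eval_pow, eval_one, eval_X, eval_natCast,
    eval_intCast, eval_zero, eval_ofNat, one_pow, Int.cast_id] at h
  linarith

/-- Let `n ≥ 2` be odd and `w = max (ν₂ (n - 1)) (ν₂ (n + 1))`. Then for every `m ≥ 2`,
`2 ^ (w + ⌊m / 2⌋)` divides `T_n^{(m)}(1)`. -/
theorem two_pow_dvd_chebyshev_iterated_deriv_one (n : ℤ) (hn : 2 ≤ n) (hodd : Odd n)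
    (w : ℕ) (hw : w = max (padicValInt 2 (n - 1)) (padicValInt 2 (n + 1))) :
    ∀ m : ℕ, 2 ≤ m →
      (2 : ℤ) ^ (w + m / 2) ∣ ((Polynomial.derivative)^[m] (T ℤ n)).eval 1 := by
  have key : ∀ (m : ℕ) (e : ℕ), ((2 : ℤ) ^ e ∣ (n ^ 2 - (m : ℤ) ^ 2) * (derivative^[m] (T ℤ n)).eval 1)
      → (2 : ℤ) ^ e ∣ (derivative^[m + 1] (T ℤ n)).eval 1 := by
    intro m e hd
    rw [← cheb_eval_rec n m] at hd
    have hc : IsCoprime ((2 : ℤ) ^ e) (2 * (m : ℤ) + 1) :=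
      (IsCoprime.pow_left (⟨-(m : ℤ), 1, by ring⟩ : IsCoprime (2 : ℤ) (2 * (m : ℤ) + 1)))
    exact hc.dvd_of_dvd_mul_left hd
  have h0 : (derivative^[0] (T ℤ n)).eval 1 = 1 := cheb_eval_one n
  have h2e : 2 ∣ n - 1 := by obtain ⟨k, hk⟩ := hodd; exact ⟨k, by omega⟩
  have h2e' : 2 ∣ n + 1 := by obtain ⟨k, hk⟩ := hodd; exact ⟨k + 1, by omega⟩
  have hbase : (2 : ℤ) ^ (w + 1) ∣ (derivative^[2] (T ℤ n)).eval 1 := by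
    apply key 1 (w + 1)
    have hd1 : (2 : ℤ) ^ padicValInt 2 (n - 1) ∣ n - 1 := padicValInt_dvd (p := 2) (n - 1)
    have hd2 : (2 : ℤ) ^ padicValInt 2 (n + 1) ∣ n + 1 := padicValInt_dvd (p := 2) (n + 1)
    have hsplit : (2 : ℤ) ^ (w + 1) ∣ (n - 1) * (n + 1) := by
      rcases max_cases (padicValInt 2 (n - 1)) (padicValInt 2 (n + 1)) with ⟨h, _⟩ | ⟨h, _⟩
      · rw [pow_succ, hw, h]
        exact mul_dvd_mul hd1 h2e'
      · rw [hw, h, pow_succ, mul_comm]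
        exact mul_dvd_mul h2e hd2
    have : (n ^ 2 - ((1 : ℕ) : ℤ) ^ 2) = (n - 1) * (n + 1) := by push_cast; ring
    rw [this]
    exact hsplit.mul_right _
  intro m hm
  induction m, hm using Nat.le_induction with
  | base => simpa using hbase
  | succ m hm ih =>
      rcases Nat.even_or_odd m with he | ho
      · have : (m + 1) / 2 = m / 2 := by obtain ⟨k, hk⟩ := he; omega
        rw [this]
        exact key m _ (Dvd.dvd.mul_left ih _)
      · have hstep : (m + 1) / 2 = m / 2 + 1 := by
          obtain ⟨k, hk⟩ := ho; omega
        rw [hstep, show w + (m / 2 + 1) = (w + m / 2) + 1 from rfl]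
        apply key m
        rw [pow_succ, mul_comm ((2:ℤ)^(w + m/2)) 2]
        apply mul_dvd_mul _ ih
        obtain ⟨j, hj⟩ := hodd
        obtain ⟨k, hk⟩ := ho
        exact ⟨2*j^2 + 2*j - 2*k^2 - 2*k, by push_cast [hj, hk]; ring⟩
end

section
/- Let n ≥ 2 be an odd integer and w = max(ν_2(n-1), ν_2(n+1)). Then for every m ≥ 2, 2^{w + ⌊m/2⌋} divides T_n^{(m)}(-1). -/
open Polynomial Polynomial.Chebyshev

/-! At `x = -1` the factor `1 - x ^ 2` of the Chebyshev differential equation vanishes, so the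
`m`-th derivative of that equation gives
`(2m + 1) T_n^{(m+1)}(-1) = (m² - n²) T_n^{(m)}(-1)`. The odd factor `2m + 1` is invisible
2-adically; the first step contributes `n² - 1`, divisible by `2 ^ (w + 1)`, and every later step
from an odd `m` contributes the even factor `m² - n²`. -/

theorem iterate_derivative_T_eval_neg_one_recurrence {R : Type*} [CommRing R] (n : ℤ) (k : ℕ) :
    (2 * k + 1) * (derivative^[k + 1] (T R n)).eval (-1) =
      (k ^ 2 - n ^ 2) * (derivative^[k] (T R n)).eval (-1) := by
  have h := one_sub_X_sq_mul_iterate_derivative_T_eval (R := R) n k (-1)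
  rw [neg_one_sq, sub_self, zero_mul] at h
  linear_combination h

theorem two_pow_succ_dvd_sq_sub_one {n : ℤ} (hn : Odd n) :
    (2 : ℤ) ^ (max (padicValInt 2 (n - 1)) (padicValInt 2 (n + 1)) + 1) ∣ n ^ 2 - 1 := by
  have h₁ : (2 : ℤ) ∣ n - 1 := (hn.sub_odd odd_one).two_dvd
  have h₂ : (2 : ℤ) ∣ n + 1 := (hn.add_odd odd_one).two_dvd
  rw [show n ^ 2 - 1 = (n - 1) * (n + 1) by ring]
  rcases max_choice (padicValInt 2 (n - 1)) (padicValInt 2 (n + 1)) with h | h <;> rw [h]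
  · rw [pow_succ]
    exact mul_dvd_mul (mod_cast padicValInt_dvd _) h₂
  · rw [pow_succ']
    exact mul_dvd_mul h₁ (mod_cast padicValInt_dvd _)

theorem two_pow_dvd_of_dvd_odd_mul {c x : ℤ} {j : ℕ} (hc : Odd c) (h : 2 ^ j ∣ c * x) :
    2 ^ j ∣ x :=
  (Int.isCoprime_two_left.mpr hc).pow_left.dvd_of_dvd_mul_left h

theorem two_pow_add_half_dvd_iterate_derivative_T_eval_neg_one {n : ℤ} (hn : Odd n) {e : ℕ}
    (he : 2 ^ (e + 1) ∣ n ^ 2 - 1) {m : ℕ} (hm : 2 ≤ m) :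
    (2 : ℤ) ^ (e + m / 2) ∣ (derivative^[m] (T ℤ n)).eval (-1) := by
  have hodd (k : ℕ) : Odd (2 * (k : ℤ) + 1) := odd_two_mul_add_one _
  induction m, hm using Nat.le_induction with
  | base =>
    refine two_pow_dvd_of_dvd_odd_mul (hodd 1) ?_
    rw [iterate_derivative_T_eval_neg_one_recurrence, Int.cast_id, Nat.cast_one, one_pow,
      ← neg_sub]
    exact (dvd_neg.mpr he).mul_right _
  | succ m _ ih =>
    refine two_pow_dvd_of_dvd_odd_mul (hodd m) ?_
    rw [iterate_derivative_T_eval_neg_one_recurrence]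
    rcases Nat.even_or_odd m with hm | hm
    · rw [show (m + 1) / 2 = m / 2 by grind]
      exact ih.mul_left _
    · have h2 : (2 : ℤ) ∣ (m : ℤ) ^ 2 - n ^ 2 := (hm.natCast.pow.sub_odd hn.pow).two_dvd
      rw [show e + (m + 1) / 2 = 1 + (e + m / 2) by grind, pow_add, pow_one]
      exact mul_dvd_mul h2 ih

theorem two_pow_dvd_chebyshev_iterated_deriv_neg_one_general (n : ℤ) (hodd : Odd n)
    (w : ℕ) (hw : w = max (padicValInt 2 (n - 1)) (padicValInt 2 (n + 1))) :
    ∀ m : ℕ, 2 ≤ m →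
      (2 : ℤ) ^ (w + m / 2) ∣ ((Polynomial.derivative)^[m] (T ℤ n)).eval (-1) := by
  subst hw
  exact fun _ ↦ two_pow_add_half_dvd_iterate_derivative_T_eval_neg_one hodd
    (two_pow_succ_dvd_sq_sub_one hodd)

/-- Let `n ≥ 2` be odd and `w = max (ν₂ (n - 1)) (ν₂ (n + 1))`. Then for every `m ≥ 2`,
`2 ^ (w + ⌊m / 2⌋)` divides `T_n^{(m)}(-1)`. -/
theorem two_pow_dvd_chebyshev_iterated_deriv_neg_one (n : ℤ) (hn : 2 ≤ n) (hodd : Odd n)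
    (w : ℕ) (hw : w = max (padicValInt 2 (n - 1)) (padicValInt 2 (n + 1))) :
    ∀ m : ℕ, 2 ≤ m →
      (2 : ℤ) ^ (w + m / 2) ∣ ((Polynomial.derivative)^[m] (T ℤ n)).eval (-1) :=
  two_pow_dvd_chebyshev_iterated_deriv_neg_one_general n hodd w hw
end

section
/- Let n be an odd positive integer and w = max(ν_2(n-1), ν_2(n+1)), and let a_1 denote the coefficient of x in T_n(x). Then 2^w divides a_1 - 1. -/
/-!
Since `T_n' = n U_{n-1}` and `U_{2k}(0) = (-1)^k`, the linear coefficient of `T_{2k+1}` is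
`(-1)^k (2k+1)`, so `a₁ - 1` is `n - 1` or `-(n + 1)`, whichever is divisible by `4`. The other
of `n ± 1` is `2` mod `4`, so its `2`-adic valuation is `1` and it contributes nothing beyond
the factor `2` that `a₁ - 1` has anyway.
-/

open Polynomial Polynomial.Chebyshev

namespace Polynomial.Chebyshev

variable {R : Type*} [CommRing R]

theorem T_coeff_one (n : ℤ) : (T R n).coeff 1 = n * (U R (n - 1)).eval 0 := by
  have h := congr_arg (coeff · 0) (T_derivative_eq_U (R := R) n)
  simp only [coeff_derivative, zero_add, Nat.cast_zero, mul_one] at h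
  rw [h, coeff_intCast_mul, coeff_zero_eq_eval_zero]

theorem T_coeff_one_two_mul_add_one (k : ℤ) :
    (T R (2 * k + 1)).coeff 1 = k.negOnePow * (2 * k + 1) := by
  rw [T_coeff_one, add_sub_cancel_right, U_eval_two_mul_zero]
  push_cast
  ring

end Polynomial.Chebyshev

theorem padicValInt_two_le_one {a : ℤ} (ha : ¬ 4 ∣ a) : padicValInt 2 a ≤ 1 := by
  by_contra! h
  exact ha (by exact_mod_cast (padicValInt_dvd_iff (p := 2) 2 a).2 (Or.inr h))

theorem two_pow_padicValInt_two_dvd {a c : ℤ} (ha : ¬ 4 ∣ a) (hc : 2 ∣ c) :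
    2 ^ padicValInt 2 a ∣ c :=
  (pow_dvd_pow 2 (padicValInt_two_le_one ha)).trans (by simpa using hc)

theorem two_pow_max_padicValInt_two_dvd {a b : ℤ} (ha : 2 ∣ a) (hb : ¬ 4 ∣ b) :
    2 ^ max (padicValInt 2 a) (padicValInt 2 b) ∣ a := by
  rcases max_choice (padicValInt 2 a) (padicValInt 2 b) with h | h <;> rw [h]
  · exact_mod_cast padicValInt_dvd (p := 2) a
  · exact two_pow_padicValInt_two_dvd hb ha

theorem two_pow_dvd_linear_coeff_sub_one_general (n : ℤ) (hodd : Odd n)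
    (w : ℕ) (hw : w = max (padicValInt 2 (n - 1)) (padicValInt 2 (n + 1))) :
    (2 : ℤ) ^ w ∣ (T ℤ n).coeff 1 - 1 := by
  obtain ⟨k, rfl⟩ := hodd
  rw [T_coeff_one_two_mul_add_one, hw]
  simp only [Int.cast_id]
  rcases k.even_or_odd with hk | hk
  · rw [Int.negOnePow_even k hk, Units.val_one, one_mul]
    obtain ⟨j, rfl⟩ := hk
    exact two_pow_max_padicValInt_two_dvd (by omega) (by omega)
  · rw [Int.negOnePow_odd k hk, Units.val_neg, Units.val_one, neg_one_mul,
      show -(2 * k + 1) - 1 = -(2 * k + 1 + 1) by ring, dvd_neg, max_comm]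
    obtain ⟨j, rfl⟩ := hk
    exact two_pow_max_padicValInt_two_dvd (by omega) (by omega)

/-- Let `n` be an odd positive integer, `w = max (ν₂ (n - 1)) (ν₂ (n + 1))`, and let `a₁` be
the coefficient of `x` in `T_n(x)`. Then `2 ^ w` divides `a₁ - 1`. -/
theorem two_pow_dvd_linear_coeff_sub_one (n : ℤ) (hn : 0 < n) (hodd : Odd n)
    (w : ℕ) (hw : w = max (padicValInt 2 (n - 1)) (padicValInt 2 (n + 1))) :
    (2 : ℤ) ^ w ∣ (T ℤ n).coeff 1 - 1 :=
  two_pow_dvd_linear_coeff_sub_one_general n hodd w hw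
end

section
/- Let n ≥ 3 be an odd integer and w = max(ν_2(n-1), ν_2(n+1)). Then for every odd index i with 3 ≤ i ≤ n, the coefficient a_i of x^i in T_n(x) is divisible by 2^w. -/
open Polynomial Polynomial.Chebyshev

private theorem mul_U_aux (R : Type*) [CommRing R] (m k : ℤ) :
    2 * (X ^ 2 - 1) * U R m * U R k = T R (m + k + 2) - T R (m - k) := by
  induction k using Polynomial.Chebyshev.induct with
  | zero =>
    have h₁ := one_sub_X_sq_mul_U_eq_pol_in_T R m
    have h₂ := T_add_two R m
    simp only [U_zero, sub_zero, mul_one]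
    linear_combination (norm := ring_nf) -2 * h₁ + h₂
  | one =>
    have h₁ := one_sub_X_sq_mul_U_eq_pol_in_T R m
    have h₂ := T_add_two R m
    have h₃ := T_add_two R (m + 1)
    have h₄ := T_sub_one R m
    simp only [U_one]
    linear_combination (norm := ring_nf) -4 * (X : R[X]) * h₁ + 2 * (X : R[X]) * h₂ - h₃ + h₄
  | add_two k ih1 ih2 =>
    have h₁ := T_add_two R (m + k + 2)
    have h₂ := T_sub_two R (m - k)
    have h₃ := U_add_two R k
    linear_combination (norm := ring_nf)
      2 * (X ^ 2 - 1 : R[X]) * U R m * h₃ - h₁ + h₂ - ih2 + 2 * (X : R[X]) * ih1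
  | neg_add_one k ih1 ih2 =>
    have h₁ := T_sub_two R (m - k + 3)
    have h₂ := T_add_two R (m + k - 1)
    have h₃ := U_add_two R (-k - 1)
    linear_combination (norm := ring_nf)
      2 * (X ^ 2 - 1 : R[X]) * U R m * h₃ - h₁ + h₂ - ih2 + 2 * (X : R[X]) * ih1

private theorem U_double_aux (c : ℤ) : U ℤ (2 * c - 1) = 2 * T ℤ c * U ℤ (c - 1) := by
  rcases eq_or_ne c 0 with rfl | hc
  · simp [U_neg_one]
  · have h1 : derivative (T ℤ (2 * c)) = ((2 * c : ℤ) : ℤ[X]) * U ℤ (2 * c - 1) := by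
      simpa using T_derivative_eq_U (R := ℤ) (2 * c)
    have h2 : T ℤ (2 * c) = (T ℤ 2).comp (T ℤ c) := T_mul ℤ 2 c
    have h3 : derivative (T ℤ (2 * c)) =
        ((2 * c : ℤ) : ℤ[X]) * (2 * T ℤ c * U ℤ (c - 1)) := by
      rw [h2, derivative_comp]
      have h4 : derivative (T ℤ c) = ((c : ℤ) : ℤ[X]) * U ℤ (c - 1) :=
        T_derivative_eq_U (R := ℤ) c
      have h5 : derivative (T ℤ 2) = 4 * X := by
        rw [T_two]
        simp [derivative_sub, derivative_mul]
        ring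
      rw [h4, h5]
      simp only [mul_comp, ofNat_comp, X_comp]
      push_cast
      ring
    have hne : ((2 * c : ℤ) : ℤ[X]) ≠ 0 := Int.cast_ne_zero.mpr (by omega)
    exact mul_left_cancel₀ hne (h1.symm.trans h3)

private theorem pow_dvd_U_aux : ∀ (k : ℕ) (c : ℤ), (2 : ℤ) ^ k ∣ c →
    ((2 : ℤ[X])) ^ k ∣ U ℤ (c - 1) := by
  intro k
  induction k with
  | zero => intro c _; simpa using one_dvd _
  | succ k ih =>
    intro c hc
    obtain ⟨d, rfl⟩ := hc
    have h : (2 : ℤ) ^ (k + 1) * d = 2 * (2 ^ k * d) := by ring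
    rw [h, U_double_aux]
    have := ih (2 ^ k * d) ⟨d, rfl⟩
    obtain ⟨Q, hQ⟩ := this
    exact ⟨T ℤ (2 ^ k * d) * Q, by rw [hQ]; ring⟩

/-- Let `n ≥ 3` be odd and `w = max (ν₂ (n - 1)) (ν₂ (n + 1))`. Then for every odd index `i`
with `3 ≤ i ≤ n`, the coefficient `aᵢ` of `x ^ i` in `T_n(x)` is divisible by `2 ^ w`. -/
theorem two_pow_dvd_chebyshev_coeff (n : ℕ) (hn : 3 ≤ n) (hodd : Odd n)
    (w : ℕ) (hw : w = max (padicValNat 2 (n - 1)) (padicValNat 2 (n + 1))) :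
    ∀ i : ℕ, Odd i → 3 ≤ i → i ≤ n → (2 : ℤ) ^ w ∣ (T ℤ n).coeff i := by
  intro i hiodd hi3 hin
  -- w ≥ 1
  have hw1 : 1 ≤ w := by
    have h2 : (2 : ℕ) ∣ n - 1 := by
      obtain ⟨t, ht⟩ := hodd; omega
    have := one_le_padicValNat_of_dvd (p := 2) (n := n - 1) (by omega) h2
    omega
  -- 2^w divides n-1 or n+1 over ℤ
  have hdvd : (2 : ℤ) ^ w ∣ (n : ℤ) - 1 ∨ (2 : ℤ) ^ w ∣ (n : ℤ) + 1 := by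
    rcases max_choice (padicValNat 2 (n - 1)) (padicValNat 2 (n + 1)) with h | h
    · left
      have := pow_padicValNat_dvd (p := 2) (n := n - 1)
      rw [← h, ← hw] at this
      have h2 : ((2 ^ w : ℕ) : ℤ) ∣ ((n - 1 : ℕ) : ℤ) := Int.natCast_dvd_natCast.mpr this
      push_cast [Nat.cast_sub (by omega : 1 ≤ n)] at h2
      exact h2
    · right
      have := pow_padicValNat_dvd (p := 2) (n := n + 1)
      rw [← h, ← hw] at this
      have h2 : ((2 ^ w : ℕ) : ℤ) ∣ ((n + 1 : ℕ) : ℤ) := Int.natCast_dvd_natCast.mpr this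
      push_cast at h2
      exact h2
  -- find b such that 2^(w-1) ∣ b and n - 2b = ±1
  obtain ⟨b, hb, hnb⟩ : ∃ b : ℤ, (2 : ℤ) ^ (w - 1) ∣ b ∧ ((n : ℤ) - 2 * b = 1 ∨ (n : ℤ) - 2 * b = -1) := by
    obtain ⟨t, ht⟩ := hodd
    rcases hdvd with h | h
    · refine ⟨((n : ℤ) - 1) / 2, ?_, ?_⟩
      · obtain ⟨c, hc⟩ := h
        refine ⟨c, ?_⟩
        have h2 : (n : ℤ) - 1 = 2 * (2 ^ (w - 1) * c) := by
          rw [hc]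
          have : (2 : ℤ) ^ w = 2 * 2 ^ (w - 1) := by
            rw [← pow_succ']
            congr 1
            omega
          rw [this]; ring
        omega
      · left; omega
    · refine ⟨((n : ℤ) + 1) / 2, ?_, ?_⟩
      · obtain ⟨c, hc⟩ := h
        refine ⟨c, ?_⟩
        have h2 : (n : ℤ) + 1 = 2 * (2 ^ (w - 1) * c) := by
          rw [hc]
          have : (2 : ℤ) ^ w = 2 * 2 ^ (w - 1) := by
            rw [← pow_succ']
            congr 1
            omega
          rw [this]; ring
        omega
      · right; omega
  -- key identity : T n - X = 2 (X^2-1) U (n-b-1) U (b-1)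
  have hkey : T ℤ (n : ℤ) - X = 2 * (X ^ 2 - 1) * U ℤ ((n : ℤ) - b - 1) * U ℤ (b - 1) := by
    have := mul_U_aux ℤ ((n : ℤ) - b - 1) (b - 1)
    have hsum : (n : ℤ) - b - 1 + (b - 1) + 2 = (n : ℤ) := by ring
    have hdiff : (n : ℤ) - b - 1 - (b - 1) = (n : ℤ) - 2 * b := by ring
    rw [hsum, hdiff] at this
    rcases hnb with h | h
    · rw [h, T_one] at this
      linear_combination -this
    · rw [h, T_neg_one] at this
      linear_combination -this
  -- 2^w divides T n - X as a polynomial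
  have hpoly : ((2 : ℤ[X])) ^ w ∣ T ℤ (n : ℤ) - X := by
    obtain ⟨Q, hQ⟩ := pow_dvd_U_aux (w - 1) b hb
    refine ⟨(X ^ 2 - 1) * U ℤ ((n : ℤ) - b - 1) * Q, ?_⟩
    rw [hkey, hQ]
    have : (2 : ℤ[X]) ^ w = 2 * 2 ^ (w - 1) := by
      rw [← pow_succ']
      congr 1
      omega
    rw [this]; ring
  obtain ⟨Q, hQ⟩ := hpoly
  have hTn : T ℤ (n : ℤ) = X + 2 ^ w * Q := by linear_combination hQ
  have := congrArg (fun p => Polynomial.coeff p i) hTn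
  rw [this, coeff_add, coeff_X, if_neg (by omega : ¬ 1 = i)]
  have h2w : ((2 : ℤ[X])) ^ w = C ((2 : ℤ) ^ w) := by rw [map_pow]; norm_num
  rw [h2w, coeff_C_mul]
  simp
end

section
/- Let n be an odd positive integer and x_0 an integer. Then T_n(x_0) ≡ x_0 (mod 4). -/
open Polynomial Polynomial.Chebyshev

lemma T_even_eval_modeq_two (x : ℤ) : ∀ k : ℕ, (T ℤ ((2 * k : ℕ) : ℤ)).eval x ≡ 1 [ZMOD 2] := by
  intro k
  induction k with
  | zero => simp [T_zero]
  | succ k ih =>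
    have h : ((2 * (k+1) : ℕ) : ℤ) = ((2*k : ℕ) : ℤ) + 2 := by push_cast; ring
    rw [h, T_add_two]
    simp only [eval_sub, eval_mul, eval_ofNat, eval_X]
    calc 2 * x * (T ℤ ((2*k:ℕ) + 1)).eval x - (T ℤ (2*k:ℕ)).eval x
        ≡ 0 - 1 [ZMOD 2] := by
          apply Int.ModEq.sub _ ih
          exact (Int.modEq_iff_dvd.mpr ⟨-(x * (T ℤ ((2*k:ℕ)+1)).eval x), by ring⟩)
      _ ≡ 1 [ZMOD 2] := by decide
    
/-- For `n` an odd positive integer and any integer `x₀`, `T_n(x₀) ≡ x₀ (mod 4)`. -/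
theorem chebyshev_eval_modeq_four (n : ℕ) (hn : 0 < n) (hodd : Odd n) (x₀ : ℤ) :
    (T ℤ n).eval x₀ ≡ x₀ [ZMOD 4] := by
  obtain ⟨k, rfl⟩ := hodd
  clear hn
  induction k with
  | zero => simp [T_one]
  | succ k ih =>
    have h : ((2 * (k+1) + 1 : ℕ) : ℤ) = ((2*k+1 : ℕ) : ℤ) + 2 := by push_cast; ring
    rw [h, T_add_two]
    simp only [eval_sub, eval_mul, eval_ofNat, eval_X]
    have h2 : ((2*k+1 : ℕ) : ℤ) + 1 = ((2*(k+1) : ℕ) : ℤ) := by push_cast; ring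
    rw [h2]
    have hT2 : (T ℤ (2*(k+1) : ℕ)).eval x₀ ≡ 1 [ZMOD 2] := T_even_eval_modeq_two x₀ _
    have hmul : 2 * x₀ * (T ℤ (2*(k+1) : ℕ)).eval x₀ ≡ 2 * x₀ * 1 [ZMOD 4] := by
      obtain ⟨c, hc⟩ := Int.modEq_iff_dvd.mp hT2
      apply Int.modEq_iff_dvd.mpr
      exact ⟨x₀ * c, by linear_combination 2 * x₀ * hc⟩
    calc 2 * x₀ * (T ℤ (2*(k+1):ℕ)).eval x₀ - (T ℤ (2*k+1:ℕ)).eval x₀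
        ≡ 2 * x₀ * 1 - x₀ [ZMOD 4] := Int.ModEq.sub hmul ih
      _ = x₀ := by ring
end

section
/- Let n be an odd integer with n ≥ 3 and let x be an odd integer. Then T_n'(x) ≡ 1 (mod 4). -/
open Polynomial Polynomial.Chebyshev

lemma U_eval_mod_four (x : ℤ) (hx : Odd x) :
    ∀ m : ℕ, ((Polynomial.Chebyshev.U ℤ m).eval x) ≡ (m + 1 : ℤ) [ZMOD 4] := by
  obtain ⟨k, hk⟩ := hx
  have h2x : (2 * x : ℤ) ≡ 2 [ZMOD 4] := by subst hk; unfold Int.ModEq; omega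
  intro m
  induction m using Nat.twoStepInduction with
  | zero => simp [U_zero]
  | one => simp only [Nat.cast_one, U_one, eval_mul, eval_ofNat, eval_X]; exact h2x.trans (by decide)
  | more m ih1 ih2 =>
    have h : Polynomial.Chebyshev.U ℤ ((m:ℤ) + 2) = 2 * X * Polynomial.Chebyshev.U ℤ (m + 1)
        - Polynomial.Chebyshev.U ℤ m := U_add_two ℤ m
    push_cast
    push_cast at h ih1 ih2 ⊢
    rw [h]
    simp only [eval_sub, eval_mul, eval_ofNat, eval_X]
    calc (2 * x * (Polynomial.Chebyshev.U ℤ ((m:ℤ) + 1)).eval x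
          - (Polynomial.Chebyshev.U ℤ m).eval x)
        ≡ 2 * ((m:ℤ) + 1 + 1) - ((m:ℤ) + 1) [ZMOD 4] := (h2x.mul ih2).sub ih1
      _ ≡ (m:ℤ) + 2 + 1 [ZMOD 4] := by ring_nf; rfl
      _ = _ := by ring

/-- For `n` odd with `n ≥ 3` and `x` an odd integer, `T_n'(x) ≡ 1 (mod 4)`. -/
theorem chebyshev_deriv_modeq_one_mod_four (n : ℕ) (hn : 3 ≤ n) (hodd : Odd n)
    (x : ℤ) (hx : Odd x) :
    (Polynomial.derivative (T ℤ n)).eval x ≡ 1 [ZMOD 4] := by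
  have hd := T_derivative_eq_U (R := ℤ) n
  rw [hd]
  obtain ⟨m, hm⟩ : ∃ m : ℕ, (n : ℤ) - 1 = m := ⟨n - 1, by omega⟩
  rw [hm]
  simp only [eval_mul, eval_intCast, Int.cast_natCast, eval_natCast]
  have hU := U_eval_mod_four x hx m
  have hn' : (n : ℤ) ≡ n [ZMOD 4] := Int.ModEq.refl _
  calc (n : ℤ) * (Polynomial.Chebyshev.U ℤ m).eval x
      ≡ (n : ℤ) * ((m : ℤ) + 1) [ZMOD 4] := hn'.mul hU
    _ = (n : ℤ) * (n : ℤ) := by rw [show ((m:ℤ)+1) = (n:ℤ) by omega]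
    _ ≡ 1 [ZMOD 4] := by
        obtain ⟨k, hk⟩ := hodd
        have : (n : ℤ) = 2*k+1 := by exact_mod_cast congrArg Nat.cast hk
        rw [this]; unfold Int.ModEq; have : (2*(k:ℤ)+1)*(2*k+1) = 4*(k*k+k)+1 := by ring
        omega
end

section
/- Let n be an odd positive integer, k ≥ 2, and x_0 ∈ ℤ. Suppose T_n(x_0) ≡ x_0 (mod 2^s) but T_n(x_0) ≢ x_0 (mod 2^{s+1}) for some s with 2 ≤ s ≤ k. Then the 2^{k-s}-fold iterate satisfies T_n^{2^{k-s}}(x_0) ≡ x_0 (mod 2^k), and 2^{k-s} is the least positive integer N with T_n^N(x_0) ≡ x_0 (mod 2^k). -/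
open Polynomial Polynomial.Chebyshev

lemma U_even_mod (j : ℕ) (x : ℤ) :
    (4:ℤ) ∣ ((U ℤ (2*j)).eval x - (-1)^j) ∧ (2:ℤ) ∣ (U ℤ (2*j+1)).eval x := by
  induction j with
  | zero =>
    refine ⟨by simp [U_zero], ?_⟩
    simp only [Nat.cast_zero, mul_zero, zero_add, U_one]
    exact ⟨x, by simp [two_mul]⟩
  | succ j ih =>
    obtain ⟨h1, h2⟩ := ih
    push_cast
    have e1 : U ℤ (2*((j:ℤ)+1)) = 2 * X * U ℤ (2*(j:ℤ)+1) - U ℤ (2*(j:ℤ)) := by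
      have := U_add_two ℤ (2*(j:ℤ))
      rw [show (2*(j:ℤ)+2) = 2*((j:ℤ)+1) by ring] at this
      rw [this]
    have e2 : U ℤ (2*((j:ℤ)+1)+1) = 2 * X * U ℤ (2*((j:ℤ)+1)) - U ℤ (2*(j:ℤ)+1) := by
      have := U_add_two ℤ (2*(j:ℤ)+1)
      rw [show (2*(j:ℤ)+1+2) = 2*((j:ℤ)+1)+1 by ring,
          show (2*(j:ℤ)+1+1) = 2*((j:ℤ)+1) by ring] at this
      rw [this]
    obtain ⟨c, hc⟩ := h2
    obtain ⟨d, hd⟩ := h1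
    constructor
    · rw [e1]
      simp only [eval_sub, eval_mul, eval_ofNat, eval_X]
      refine ⟨x*c - d, ?_⟩
      rw [pow_succ]
      have hx : (U ℤ (2*(j:ℤ))).eval x = 4*d + (-1)^j := by linarith
      rw [hc, hx]; ring
    · rw [e2]
      simp only [eval_sub, eval_mul, eval_ofNat, eval_X]
      exact ⟨x * ((U ℤ (2*((j:ℤ)+1))).eval x) - c, by rw [hc]; ring⟩

/-- For odd `n`, `T_n'(x) ≡ 1 (mod 4)` for every integer `x`. -/
lemma deriv_T_mod_four {n : ℕ} (hodd : Odd n) (x : ℤ) :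
    (4:ℤ) ∣ ((derivative (T ℤ n)).eval x - 1) := by
  obtain ⟨j, rfl⟩ := hodd
  have hder : derivative (T ℤ (2*j+1:ℕ)) = ((2*j+1:ℕ):ℤ) * U ℤ (2*(j:ℤ)) := by
    have := T_derivative_eq_U (R := ℤ) ((2*j+1:ℕ):ℤ)
    rw [this]
    norm_num
  rw [hder]
  obtain ⟨d, hd⟩ := (U_even_mod j x).1
  have hU : (U ℤ (2*(j:ℤ))).eval x = 4*d + (-1)^j := by
    have : ((2*j:ℕ):ℤ) = 2*(j:ℤ) := by push_cast; ring
    rw [← this] at hd ⊢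
    linarith
  simp only [eval_mul, eval_intCast, eval_natCast, hU]
  push_cast
  rcases Nat.even_or_odd j with ⟨a, ha⟩ | ⟨a, ha⟩
  · subst ha
    have h1 : (-1:ℤ)^(a+a) = 1 := by
      rw [← two_mul, pow_mul]; norm_num
    rw [h1]
    refine ⟨4*(a:ℤ)*d + a + d, ?_⟩
    push_cast; ring
  · subst ha
    have h1 : (-1:ℤ)^(2*a+1) = -1 := by
      rw [pow_succ, pow_mul]; norm_num
    rw [h1]
    refine ⟨4*(a:ℤ)*d + 3*d - a - 1, ?_⟩
    push_cast; ring

/-- One-step contraction: if `a ≡ b (mod 2^t)` with `t ≥ 2`, then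
`T_n(a) - T_n(b) ≡ a - b (mod 2^(t+2))`, for odd `n`. -/
lemma cheb_step {n : ℕ} (hodd : Odd n) {t : ℕ} (ht : 2 ≤ t) {a b : ℤ}
    (hab : (2:ℤ)^t ∣ a - b) :
    (2:ℤ)^(t+2) ∣ ((T ℤ n).eval a - (T ℤ n).eval b) - (a - b) := by
  obtain ⟨kk, hk⟩ := (T ℤ n).binomExpansion b (a - b)
  rw [show b + (a - b) = a by ring] at hk
  have key : (T ℤ n).eval a - (T ℤ n).eval b - (a - b)
      = ((derivative (T ℤ n)).eval b - 1) * (a - b) + kk * (a - b)^2 := by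
    rw [hk]; ring
  rw [key]
  have h1 : (2:ℤ)^(t+2) ∣ ((derivative (T ℤ n)).eval b - 1) * (a - b) := by
    obtain ⟨c, hc⟩ := deriv_T_mod_four hodd b
    obtain ⟨e, he⟩ := hab
    refine ⟨c * e, ?_⟩
    have : (derivative (T ℤ n)).eval b - 1 = 4 * c := hc.symm ▸ by linarith [hc]
    rw [this, he, pow_add]
    ring
  have h2 : (2:ℤ)^(t+2) ∣ kk * (a - b)^2 := by
    obtain ⟨e, he⟩ := hab
    have h2t : (2:ℤ)^(t+2) ∣ (2:ℤ)^(2*t) := pow_dvd_pow 2 (by omega)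
    refine dvd_trans h2t ⟨kk * e^2, ?_⟩
    rw [he, two_mul, pow_add]; ring
  exact dvd_add h1 h2

/-- Iterated contraction. -/
lemma cheb_iter_step {n : ℕ} (hodd : Odd n) {t : ℕ} (ht : 2 ≤ t) {a b : ℤ}
    (hab : (2:ℤ)^t ∣ a - b) (m : ℕ) :
    (2:ℤ)^(t+2) ∣ (((fun x : ℤ => (T ℤ n).eval x)^[m] a - (fun x : ℤ => (T ℤ n).eval x)^[m] b) - (a - b)) := by
  induction m with
  | zero => simpa using dvd_zero _
  | succ m ih =>
    set f : ℤ → ℤ := fun x => (T ℤ n).eval x with hf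
    have hdvd : (2:ℤ)^t ∣ f^[m] a - f^[m] b := by
      have h' : (2:ℤ)^t ∣ (f^[m] a - f^[m] b) - (a - b) :=
        dvd_trans (pow_dvd_pow 2 (by omega)) ih
      have := dvd_add h' hab
      simpa using this
    have hstep := cheb_step hodd ht hdvd
    rw [Function.iterate_succ_apply', Function.iterate_succ_apply']
    have := dvd_add hstep ih
    simpa using this

/-- Exact 2-adic valuation transfer for `m`-fold iteration:
`f^[m] x₀ - x₀ ≡ m * (f x₀ - x₀) (mod 2^(t+2))` where `f` is any iterate of `T_n`. -/
lemma cheb_iterate_linear {n : ℕ} (hodd : Odd n) {t r : ℕ} (ht : 2 ≤ t) {x₀ : ℤ}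
    (hD : (2:ℤ)^t ∣ (fun x : ℤ => (T ℤ n).eval x)^[r] x₀ - x₀) (m : ℕ) :
    (2:ℤ)^(t+2) ∣ (((fun x : ℤ => (T ℤ n).eval x)^[r])^[m] x₀ - x₀)
      - (m:ℤ) * ((fun x : ℤ => (T ℤ n).eval x)^[r] x₀ - x₀) := by
  set f : ℤ → ℤ := fun x => (T ℤ n).eval x with hf
  set D : ℤ := f^[r] x₀ - x₀ with hDdef
  induction m with
  | zero => simpa using dvd_zero _
  | succ m ih =>
    have hdvd : (2:ℤ)^t ∣ (f^[r])^[m] x₀ - x₀ := by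
      have h' : (2:ℤ)^t ∣ ((f^[r])^[m] x₀ - x₀) - (m:ℤ) * D :=
        dvd_trans (pow_dvd_pow 2 (by omega)) ih
      have h'' : (2:ℤ)^t ∣ (m:ℤ) * D := Dvd.dvd.mul_left hD m
      have := dvd_add h' h''
      simpa using this
    have hstep := cheb_iter_step hodd ht hdvd r (a := (f^[r])^[m] x₀) (b := x₀)
    rw [Function.iterate_succ_apply']
    have hcomb := dvd_add hstep ih
    have : (f^[r] ((f^[r])^[m] x₀) - f^[r] x₀ - ((f^[r])^[m] x₀ - x₀))
        + (((f^[r])^[m] x₀ - x₀) - (m:ℤ) * D)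
        = (f^[r] ((f^[r])^[m] x₀) - x₀) - ((m:ℕ)+1:ℤ) * D := by
      rw [hDdef]; ring
    rw [this] at hcomb
    have hcast : ((m+1:ℕ):ℤ) = ((m:ℕ):ℤ)+1 := by push_cast; ring
    rw [hcast]
    exact hcomb

/-- Let `n` be an odd positive integer, `k ≥ 2`, and `x₀ ∈ ℤ`. Suppose
`T_n(x₀) ≡ x₀ (mod 2 ^ s)` but `T_n(x₀) ≢ x₀ (mod 2 ^ (s + 1))` for some `2 ≤ s ≤ k`.
Then `T_n^{2^(k-s)}(x₀) ≡ x₀ (mod 2 ^ k)`, and `2 ^ (k - s)` is the least positive integer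
`N` with `T_n^N(x₀) ≡ x₀ (mod 2 ^ k)`. -/
theorem chebyshev_iterate_period_two_pow (n : ℕ) (hn : 0 < n) (hodd : Odd n)
    (k s : ℕ) (hk : 2 ≤ k) (hs2 : 2 ≤ s) (hsk : s ≤ k) (x₀ : ℤ)
    (h1 : (T ℤ n).eval x₀ ≡ x₀ [ZMOD 2 ^ s])
    (h2 : ¬ ((T ℤ n).eval x₀ ≡ x₀ [ZMOD 2 ^ (s + 1)])) :
    ((fun x : ℤ => (T ℤ n).eval x)^[2 ^ (k - s)] x₀ ≡ x₀ [ZMOD 2 ^ k]) ∧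
    (∀ N : ℕ, 0 < N → ((fun x : ℤ => (T ℤ n).eval x)^[N] x₀ ≡ x₀ [ZMOD 2 ^ k]) →
      2 ^ (k - s) ≤ N) := by
  set f : ℤ → ℤ := fun x => (T ℤ n).eval x with hf
  have hfx : f^[1] x₀ = (T ℤ n).eval x₀ := by simp [hf]
  -- Convert hypotheses to divisibility (exact valuation s)
  have hd1 : (2:ℤ)^s ∣ f^[1] x₀ - x₀ := by
    rw [hfx]
    have := Int.ModEq.dvd h1
    simpa using (dvd_neg.mpr this)
  have hd2 : ¬ (2:ℤ)^(s+1) ∣ f^[1] x₀ - x₀ := by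
    rw [hfx]
    intro hcon
    exact h2 (Int.modEq_iff_dvd.mpr (by simpa using dvd_neg.mpr hcon))
  -- exact valuation along doublings
  have E : ∀ j : ℕ, (2:ℤ)^(s+j) ∣ f^[2^j] x₀ - x₀ ∧ ¬ (2:ℤ)^(s+j+1) ∣ f^[2^j] x₀ - x₀ := by
    intro j
    induction j with
    | zero => simpa using ⟨hd1, hd2⟩
    | succ j ih =>
      obtain ⟨ha, hb⟩ := ih
      set t : ℕ := s + j with htdef
      have ht : 2 ≤ t := by omega
      set D : ℤ := f^[2^j] x₀ - x₀ with hD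
      -- f^[2^(j+1)] x₀ = f^[2^j] (f^[2^j] x₀)
      have hiter : f^[2^(j+1)] x₀ = f^[2^j] (f^[2^j] x₀) := by
        rw [show 2^(j+1) = 2^j + 2^j by omega, Function.iterate_add_apply]
      have hstep := cheb_iter_step hodd ht ha (2^j) (a := f^[2^j] x₀) (b := x₀)
      -- f^[2^(j+1)] x₀ - x₀ - 2*D divisible by 2^(t+2)
      have hkey : (2:ℤ)^(t+2) ∣ (f^[2^(j+1)] x₀ - x₀) - 2*D := by
        rw [hiter]
        have : (f^[2^j] (f^[2^j] x₀) - f^[2^j] x₀ - (f^[2^j] x₀ - x₀))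
            = (f^[2^j] (f^[2^j] x₀) - x₀) - 2*D := by rw [hD]; ring
        rwa [this] at hstep
      obtain ⟨d, hdD⟩ := ha
      have hdodd : ¬ (2:ℤ) ∣ d := by
        intro ⟨e, he⟩
        exact hb ⟨e, by rw [hdD, he, pow_succ]; ring⟩
      constructor
      · have h2D : (2:ℤ)^(s+(j+1)) ∣ 2*D := ⟨d, by rw [hdD, show s+(j+1) = t+1 by omega, pow_succ]; ring⟩
        have herr : (2:ℤ)^(s+(j+1)) ∣ (f^[2^(j+1)] x₀ - x₀) - 2*D :=
          dvd_trans (pow_dvd_pow 2 (by omega)) hkey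
        have := dvd_add herr h2D
        simpa using this
      · intro hcon
        have herr : (2:ℤ)^(t+2) ∣ (f^[2^(j+1)] x₀ - x₀) - 2*D := hkey
        have h2D : (2:ℤ)^(t+2) ∣ 2*D := by
          have : (2:ℤ)^(t+2) ∣ (f^[2^(j+1)] x₀ - x₀) := by
            rwa [show t+2 = s+(j+1)+1 by omega]
          have := dvd_sub this herr
          simpa using this
        -- contradiction: 2*D = 2^(t+1) * d with d odd
        obtain ⟨e, he⟩ := h2D
        apply hdodd
        refine ⟨e, ?_⟩
        have h2t : (2:ℤ)^(t+1) ≠ 0 := by positivity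
        have : (2:ℤ)^(t+1) * d = (2:ℤ)^(t+1) * (2*e) := by
          rw [show (2:ℤ)^(t+1) * d = 2*D by rw [hdD, pow_succ]; ring]
          rw [he]
          ring
        exact mul_left_cancel₀ h2t this
  constructor
  · -- part 1
    have := (E (k - s)).1
    rw [show s + (k - s) = k by omega] at this
    exact Int.modEq_iff_dvd.mpr (by simpa using dvd_neg.mpr this)
  · -- minimality
    intro N hN hmod
    by_contra hlt
    push_neg at hlt
    obtain ⟨j, m, hm2, hNeq⟩ := Nat.exists_eq_pow_mul_and_not_dvd hN.ne' 2 (by norm_num)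
    have hmodd : Odd m := Nat.odd_iff.mpr (Nat.not_even_iff.mp (fun h => hm2 h.two_dvd))
    have hmpos : 0 < m := by
      rcases Nat.eq_zero_or_pos m with h | h
      · exfalso; exact hm2 (h ▸ dvd_zero 2)
      · exact h
    have hjlt : j < k - s := by
      by_contra hj
      push_neg at hj
      have : 2^(k-s) ≤ N := by
        calc 2^(k-s) ≤ 2^j := Nat.pow_le_pow_right (by norm_num) hj
        _ ≤ 2^j * m := Nat.le_mul_of_pos_right _ hmpos
        _ = N := hNeq.symm
      omega
    set t : ℕ := s + j with htdef
    have ht : 2 ≤ t := by omega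
    obtain ⟨ha, hb⟩ := E j
    set D : ℤ := f^[2^j] x₀ - x₀ with hD
    have hlin := cheb_iterate_linear hodd ht ha m
    have hiter : f^[N] x₀ = (f^[2^j])^[m] x₀ := by
      rw [hNeq, Function.iterate_mul]
    -- 2^(t+1) divides f^[N] x₀ - x₀ (since t+1 ≤ k), so 2^(t+1) ∣ m*D, contradiction
    have hNk : (2:ℤ)^k ∣ f^[N] x₀ - x₀ := by
      have := Int.ModEq.dvd hmod
      simpa using dvd_neg.mpr this
    have ht1k : (2:ℤ)^(t+1) ∣ f^[N] x₀ - x₀ :=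
      dvd_trans (pow_dvd_pow 2 (by omega)) hNk
    have hmD : (2:ℤ)^(t+1) ∣ (m:ℤ) * D := by
      have herr : (2:ℤ)^(t+1) ∣ ((f^[2^j])^[m] x₀ - x₀) - (m:ℤ)*D :=
        dvd_trans (pow_dvd_pow 2 (by omega)) hlin
      rw [hiter] at ht1k
      have := dvd_sub ht1k herr
      simpa using this
    -- but v₂(m*D) = t exactly
    obtain ⟨d, hdD⟩ := ha
    have hdodd : ¬ (2:ℤ) ∣ d := by
      intro ⟨e, he⟩
      exact hb ⟨e, by rw [hdD, he, pow_succ]; ring⟩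
    obtain ⟨e, he⟩ := hmD
    have h2t : (2:ℤ)^t ≠ 0 := by positivity
    have hcancel : (m:ℤ) * d = 2 * e := by
      have : (2:ℤ)^t * ((m:ℤ)*d) = (2:ℤ)^t * (2*e) := by
        rw [show (2:ℤ)^t * ((m:ℤ)*d) = (m:ℤ)*D by rw [hdD]; ring]
        rw [he, pow_succ]
        ring
      exact mul_left_cancel₀ h2t this
    have : Odd ((m:ℤ) * d) := by
      refine Odd.mul ?_ ?_
      · exact (Int.odd_coe_nat m).mpr hmodd
      · rcases Int.even_or_odd d with h | h
        · exact absurd h.two_dvd hdodd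
        · exact h
    rw [hcancel] at this
    exact (Int.not_odd_iff_even.mpr ⟨e, by ring⟩) this
end

section
/- Let n be an odd integer with gcd(n,3)=1 (i.e., n ≡ ±1 mod 6), s ≥ 2 an integer, and set w = max(ν_3(n-1), ν_3(n+1)), where ν_3 is the 3-adic valuation. Suppose T_n^t(x_0) ≡ x_0 (mod 3^v) and T_n^t(x_0) ≢ x_0 (mod 3^{v+1}) for some v ≥ 2 and positive integer t, and that T_n'(x_0) ≡ 1 (mod 3). Then T_n^{3t}(x_0) ≡ x_0 (mod 3^{v+1}) and T_n^{3t}(x_0) ≢ x_0 (mod 3^{v+2}). -/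
open Polynomial Polynomial.Chebyshev

private lemma evalT_one (m : ℕ) : (T ℤ m).eval 1 = 1 := by
  induction m using Nat.twoStepInduction with
  | zero => simp [T_zero]
  | one => simp [T_one]
  | more m ih1 ih2 =>
    rw [show ((m + 2 : ℕ) : ℤ) = (m : ℤ) + 2 by push_cast; ring, T_add_two]
    push_cast at ih1 ih2 ⊢
    simp only [eval_sub, eval_mul, eval_ofNat, eval_X, ih1, ih2]
    ring

private lemma evalT_neg_one (m : ℕ) : (T ℤ m).eval (-1) = (-1) ^ m := by
  induction m using Nat.twoStepInduction with
  | zero => simp [T_zero]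
  | one => simp [T_one]
  | more m ih1 ih2 =>
    rw [show ((m + 2 : ℕ) : ℤ) = (m : ℤ) + 2 by push_cast; ring, T_add_two]
    push_cast at ih1 ih2 ⊢
    simp only [eval_sub, eval_mul, eval_ofNat, eval_X, ih1, ih2]
    ring

private lemma evalT_zero (m : ℕ) (hm : Odd m) : (T ℤ m).eval 0 = 0 := by
  induction m using Nat.twoStepInduction with
  | zero => simp at hm
  | one => simp [T_one]
  | more m ih1 _ =>
    rw [show ((m + 2 : ℕ) : ℤ) = (m : ℤ) + 2 by push_cast; ring, T_add_two]
    have hm' : Odd m := by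
      rcases hm with ⟨k, hk⟩; exact ⟨k - 1, by omega⟩
    simp only [eval_sub, eval_mul, eval_ofNat, eval_X, ih1 hm']
    ring

private lemma T_id_mod3 (m : ℕ) (hm : Odd m) (z : ℤ) :
    (3 : ℤ) ∣ (T ℤ m).eval z - z := by
  obtain ⟨r, hr, hdvd⟩ : ∃ r : ℤ, (T ℤ m).eval r = r ∧ (3 : ℤ) ∣ z - r := by
    have h3 : z % 3 = 0 ∨ z % 3 = 1 ∨ z % 3 = 2 := by omega
    rcases h3 with h | h | h
    · exact ⟨0, evalT_zero m hm, by omega⟩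
    · exact ⟨1, evalT_one m, by omega⟩
    · exact ⟨-1, by rw [evalT_neg_one m, Odd.neg_one_pow hm], by omega⟩
  have h1 : (3 : ℤ) ∣ (T ℤ m).eval z - (T ℤ m).eval r :=
    dvd_trans hdvd (sub_dvd_eval_sub z r _)
  rw [hr] at h1
  obtain ⟨c1, hc1⟩ := h1
  obtain ⟨c2, hc2⟩ := hdvd
  exact ⟨c1 - c2, by linarith⟩

/-- Let `n` be odd with `gcd(n, 3) = 1`. Suppose `T_n^t(x₀) ≡ x₀ (mod 3 ^ v)` and
`T_n^t(x₀) ≢ x₀ (mod 3 ^ (v + 1))` for some `v ≥ 2` and positive `t`, and that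
`T_n'(x₀) ≡ 1 (mod 3)`. Then `T_n^{3t}(x₀) ≡ x₀ (mod 3 ^ (v + 1))` and
`T_n^{3t}(x₀) ≢ x₀ (mod 3 ^ (v + 2))`. -/
theorem chebyshev_iterate_lift_mod_three_pow (n : ℕ) (hodd : Odd n) (hgcd : Nat.gcd n 3 = 1)
    (t v : ℕ) (ht : 0 < t) (hv : 2 ≤ v) (x₀ : ℤ)
    (h1 : (fun x : ℤ => (T ℤ n).eval x)^[t] x₀ ≡ x₀ [ZMOD 3 ^ v])
    (h2 : ¬ ((fun x : ℤ => (T ℤ n).eval x)^[t] x₀ ≡ x₀ [ZMOD 3 ^ (v + 1)]))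
    (hder : (Polynomial.derivative (T ℤ n)).eval x₀ ≡ 1 [ZMOD 3]) :
    ((fun x : ℤ => (T ℤ n).eval x)^[3 * t] x₀ ≡ x₀ [ZMOD 3 ^ (v + 1)]) ∧
    ¬ ((fun x : ℤ => (T ℤ n).eval x)^[3 * t] x₀ ≡ x₀ [ZMOD 3 ^ (v + 2)]) := by
  set f : ℤ → ℤ := fun x : ℤ => (T ℤ n).eval x with hf
  -- iterates stay ≡ x₀ mod 3
  have hiter3 : ∀ (k : ℕ) (x : ℤ), (3 : ℤ) ∣ f^[k] x - x := by
    intro k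
    induction k with
    | zero => intro x; simp
    | succ k ih =>
      intro x
      rw [Function.iterate_succ_apply]
      obtain ⟨c1, hc1⟩ := ih (f x)
      obtain ⟨c2, hc2⟩ := T_id_mod3 n hodd x
      exact ⟨c1 + c2, by simp only [hf] at hc1 ⊢; linarith⟩
  -- derivative ≡ 1 mod 3 at any point ≡ x₀ mod 3
  have hder' : ∀ y : ℤ, (3 : ℤ) ∣ y - x₀ →
      (3 : ℤ) ∣ (Polynomial.derivative (T ℤ n)).eval y - 1 := by
    intro y hy
    have h1' : (3 : ℤ) ∣ (Polynomial.derivative (T ℤ n)).eval y -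
        (Polynomial.derivative (T ℤ n)).eval x₀ :=
      dvd_trans hy (sub_dvd_eval_sub y x₀ _)
    have h2' : (3 : ℤ) ∣ 1 - (Polynomial.derivative (T ℤ n)).eval x₀ := hder.dvd
    obtain ⟨c1, hc1⟩ := h1'
    obtain ⟨c2, hc2⟩ := h2'
    exact ⟨c1 - c2, by linarith⟩
  -- key lemma: linearization of f^[t] around x₀ modulo 3^(v+2)
  have key : ∀ k : ℕ, ∃ D : ℤ, (3 : ℤ) ∣ D - 1 ∧ ∀ x : ℤ, (3 ^ v : ℤ) ∣ x - x₀ →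
      (3 ^ (v + 2) : ℤ) ∣ f^[k] x - f^[k] x₀ - D * (x - x₀) := by
    intro k
    induction k with
    | zero => exact ⟨1, by simp, fun x hx => by simp⟩
    | succ k ih =>
      obtain ⟨D, hD1, hD⟩ := ih
      refine ⟨(Polynomial.derivative (T ℤ n)).eval (f^[k] x₀) * D, ?_, ?_⟩
      · obtain ⟨c1, hc1⟩ := hder' (f^[k] x₀) (hiter3 k x₀)
        obtain ⟨c2, hc2⟩ := hD1
        exact ⟨c1 * D + c2, by linear_combination D * hc1 + hc2⟩
      · intro x hx
        obtain ⟨q, hq⟩ := hD x hx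
        have hzw : (3 ^ v : ℤ) ∣ f^[k] x - f^[k] x₀ := by
          obtain ⟨u, hu⟩ := hx
          exact ⟨3 ^ 2 * q + D * u, by rw [show (3:ℤ)^v * (3^2*q + D*u) =
            3^(v+2) * q + D * (3^v * u) by ring, ← hu, ← hq]; ring⟩
        obtain ⟨s, hs⟩ := hzw
        obtain ⟨c, hc⟩ := (T ℤ n).binomExpansion (f^[k] x₀) (f^[k] x - f^[k] x₀)
        rw [show f^[k] x₀ + (f^[k] x - f^[k] x₀) = f^[k] x by ring] at hc
        rw [Function.iterate_succ_apply' f k x, Function.iterate_succ_apply' f k x₀]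
        have hpow : (3 ^ v : ℤ) * 3 ^ v = 3 ^ (v + 2) * 3 ^ (v - 2) := by
          rw [← pow_add, ← pow_add]; congr 1; omega
        refine ⟨(Polynomial.derivative (T ℤ n)).eval (f^[k] x₀) * q +
          c * s ^ 2 * 3 ^ (v - 2), ?_⟩
        have e1 : f (f^[k] x) = f (f^[k] x₀) +
            (Polynomial.derivative (T ℤ n)).eval (f^[k] x₀) * (f^[k] x - f^[k] x₀) +
            c * (f^[k] x - f^[k] x₀) ^ 2 := hc
        linear_combination e1 + (Polynomial.derivative (T ℤ n)).eval (f^[k] x₀) * hq +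
          c * (f^[k] x - f^[k] x₀ + 3 ^ v * s) * hs + c * s ^ 2 * hpow
  -- now the main argument
  obtain ⟨D, hD1, hD⟩ := key t
  set A := f^[t] x₀ with hA
  have ha : (3 ^ v : ℤ) ∣ A - x₀ := (Int.modEq_iff_dvd.mp h1.symm)
  have hna : ¬ (3 ^ (v + 1) : ℤ) ∣ A - x₀ := by
    intro hcon
    apply h2
    obtain ⟨c, hc⟩ := hcon
    exact Int.modEq_iff_dvd.mpr ⟨-c, by linarith⟩
  obtain ⟨q1, hq1⟩ := hD A ha
  obtain ⟨u, hu⟩ := ha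
  set B := f^[t] A with hB
  have hb : (3 ^ v : ℤ) ∣ B - x₀ :=
    ⟨3 ^ 2 * q1 + D * u + u, by linear_combination hq1 + (D + 1) * hu⟩
  obtain ⟨q2, hq2⟩ := hD B hb
  set C := f^[t] B with hC
  obtain ⟨e, he⟩ := hD1
  -- C - x₀ ≡ 3 * (A - x₀)  mod 3^(v+2)
  have hmain : (3 ^ (v + 2) : ℤ) ∣ C - x₀ - 3 * (A - x₀) := by
    refine ⟨q2 + D * q1 + (e + e ^ 2) * u, ?_⟩
    have hsq : D ^ 2 + D - 2 = 9 * (e + e ^ 2) := by linear_combination (D + 3 * e + 2) * he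
    linear_combination hq2 + D * hq1 + (D ^ 2 + D - 2) * hu + 3 ^ v * u * hsq
  have hiter : f^[3 * t] x₀ = C := by
    rw [hC, hB, hA, ← Function.iterate_add_apply, ← Function.iterate_add_apply]
    congr 1
    omega
  have hp2 : (3 : ℤ) ^ (v + 2) = 3 ^ (v + 1) * 3 := by rw [pow_succ]
  constructor
  · rw [hiter]
    refine Int.modEq_iff_dvd.mpr ?_
    obtain ⟨m, hm⟩ := hmain
    refine ⟨-(3 * m + u), ?_⟩
    linear_combination -hm - 3 * hu
  · rw [hiter]
    intro hcon
    obtain ⟨m1, hm1⟩ := Int.modEq_iff_dvd.mp hcon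
    obtain ⟨m2, hm2⟩ := hmain
    apply hna
    refine ⟨-m1 - m2, ?_⟩
    have h3 : (3 : ℤ) * (A - x₀) = 3 ^ (v + 2) * (-m1) - 3 ^ (v + 2) * m2 := by linarith
    have h4 : (3 : ℤ) * (A - x₀) = 3 * (3 ^ (v + 1) * (-m1 - m2)) := by
      rw [h3, hp2]; ring
    linarith
end

section
/- Let n ≥ 2 be an integer with n ≡ ±1 (mod 6) and w = max(ν_3(n-1), ν_3(n+1)) ≥ 1. Then for every m ≥ 3, ν_3( T_n^{(m)}(1) · 3^m / m! ) ≥ w + 2, where T_n^{(m)}(1)·3^m/m! is an integer times a power of 3 interpreted via the formula T_n^{(m)}(1) = ∏_{j=0}^{m-1} (n^2-j^2)/(2j+1). -/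
/-!
Iterating the Chebyshev differential equation at `x = 1` gives
`T_n^{(m)}(1) / m! = 2^m ∏_{j<m} (n² - j²) / (2m)!`. In the numerator the factor `n² - 1`
is divisible by `3^w` and, as `3 ∤ n`, the factor `n² - 4` by `3`, while Legendre's formula
gives `ν₃((2m)!) < m`; the factor `3^m` makes up the difference.
-/

open Polynomial Polynomial.Chebyshev Finset Nat

theorem prod_range_two_mul_add_one_mul_two_pow_mul_factorial (m : ℕ) :
    (∏ j ∈ range m, (2 * j + 1)) * (2 ^ m * m !) = (2 * m)! := by
  induction m with
  | zero => rfl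
  | succ m ih =>
    rw [prod_range_succ, pow_succ, factorial_succ, show 2 * (m + 1) = 2 * m + 1 + 1 by ring,
      factorial_succ, factorial_succ, ← ih]
    ring

theorem iterate_derivative_T_eval_one_div_factorial {K : Type*} [Field K] [CharZero K]
    (n : ℤ) (m : ℕ) :
    (derivative^[m] (T K n)).eval 1 / m ! =
      ((2 ^ m * ∏ j ∈ range m, (n ^ 2 - (j : ℤ) ^ 2) : ℤ) : K) / (2 * m)! := by
  rw [iterate_derivative_T_eval_one_eq_div,
    ← prod_range_two_mul_add_one_mul_two_pow_mul_factorial]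
  have hodd : ((∏ j ∈ range m, (2 * j + 1) : ℕ) : K) ≠ 0 := by
    exact_mod_cast (prod_ne_zero_iff.mpr fun _ _ => by positivity)
  have hfact : (m ! : K) ≠ 0 := by exact_mod_cast m.factorial_ne_zero
  push_cast
  field_simp

theorem pow_max_padicValNat_dvd_mul (p a b : ℕ) :
    p ^ max (padicValNat p a) (padicValNat p b) ∣ a * b := by
  rcases max_choice (padicValNat p a) (padicValNat p b) with h | h <;> rw [h]
  · exact dvd_mul_of_dvd_left pow_padicValNat_dvd b
  · exact dvd_mul_of_dvd_right pow_padicValNat_dvd a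

theorem three_dvd_sq_sub_four {n : ℤ} (hn : ¬ 3 ∣ n) : 3 ∣ n ^ 2 - 4 := by
  rw [show n ^ 2 - 4 = (n - 2) * (n + 2) by ring]
  rcases (by omega : 3 ∣ n - 2 ∨ 3 ∣ n + 2) with h | h
  · exact dvd_mul_of_dvd_left h _
  · exact dvd_mul_of_dvd_right h _

theorem sub_one_mul_sub_four_dvd_prod_range {R : Type*} [CommRing R] (x : R) {m : ℕ}
    (hm : 3 ≤ m) : (x - 1) * (x - 4) ∣ ∏ j ∈ range m, (x - (j : R) ^ 2) := by
  have h3 : ∏ j ∈ range 3, (x - (j : R) ^ 2) = x * ((x - 1) * (x - 4)) := by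
    simp only [prod_range_succ, range_zero, prod_empty]
    push_cast
    ring
  calc (x - 1) * (x - 4) ∣ x * ((x - 1) * (x - 4)) := dvd_mul_left _ x
    _ = ∏ j ∈ range 3, (x - (j : R) ^ 2) := h3.symm
    _ ∣ ∏ j ∈ range m, (x - (j : R) ^ 2) := prod_dvd_prod_of_subset _ _ _ (range_mono hm)

theorem padicValNat_factorial_two_mul_lt {p : ℕ} [Fact p.Prime] (hp : p ≠ 2) {m : ℕ}
    (hm : m ≠ 0) : padicValNat p (2 * m)! < m := by
  have hlt := sub_one_mul_padicValNat_factorial_lt_of_ne_zero p (n := 2 * m) (by omega)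
  have h2 : 2 * padicValNat p (2 * m)! ≤ (p - 1) * padicValNat p (2 * m)! :=
    Nat.mul_le_mul_right _ (by have := (Fact.out : p.Prime).two_le; omega)
  omega

theorem lt_padicValRat_pow_mul_div_factorial_two_mul {p : ℕ} [Fact p.Prime] (hp : p ≠ 2)
    {a : ℤ} (ha : a ≠ 0) {k m : ℕ} (hm : m ≠ 0) (hdvd : (p : ℤ) ^ k ∣ a) :
    (k : ℤ) < padicValRat p (p ^ m * a / (2 * m)!) := by
  have hp1 : 1 < p := (Fact.out : p.Prime).one_lt
  have hk : k ≤ padicValInt p a := ((padicValInt_dvd_iff k a).mp hdvd).resolve_left ha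
  have hfact := padicValNat_factorial_two_mul_lt hp hm
  rw [padicValRat.div (by positivity) (by positivity), padicValRat.mul (by positivity)
    (by exact_mod_cast ha), padicValRat.pow, padicValRat.self hp1, padicValRat.of_int,
    padicValRat.of_nat]
  omega

theorem padicValRat_chebyshev_taylor_coeff_general (n : ℕ)
    (hmod : n % 6 = 1 ∨ n % 6 = 5)
    (w : ℕ) (hw : w = max (padicValNat 3 (n - 1)) (padicValNat 3 (n + 1))) :
    ∀ m : ℕ, 3 ≤ m →
      ((Polynomial.derivative)^[m] (T ℚ n)).eval 1 * 3 ^ m / (m.factorial : ℚ) = 0 ∨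
      (w + 2 : ℤ) ≤ padicValRat 3
        (((Polynomial.derivative)^[m] (T ℚ n)).eval 1 * 3 ^ m / (m.factorial : ℚ)) := by
  have : Fact (Nat.Prime 3) := ⟨Nat.prime_three⟩
  intro m hm
  set P := ∏ j ∈ range m, ((n : ℤ) ^ 2 - (j : ℤ) ^ 2)
  have hcoeff : (derivative^[m] (T ℚ n)).eval 1 * 3 ^ m / m ! =
      3 ^ m * ((2 ^ m * P : ℤ) : ℚ) / (2 * m)! := by
    rw [mul_div_right_comm, iterate_derivative_T_eval_one_div_factorial]
    ring
  rw [hcoeff]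
  by_cases hP : P = 0
  · left
    simp [hP]
  right
  have hdvd_sq_sub_one : (3 : ℤ) ^ w ∣ (n : ℤ) ^ 2 - 1 := by
    have := Int.natCast_dvd_natCast.mpr (hw ▸ pow_max_padicValNat_dvd_mul 3 (n - 1) (n + 1))
    rw [Nat.cast_mul, Nat.cast_sub (show 1 ≤ n by omega), Nat.cast_pow] at this
    push_cast at this
    convert this using 1
    ring
  have hdvd_sq_sub_four : (3 : ℤ) ∣ (n : ℤ) ^ 2 - 4 := three_dvd_sq_sub_four (by omega)
  have hdvd : ((3 : ℕ) : ℤ) ^ (w + 1) ∣ 2 ^ m * P := by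
    rw [pow_succ]
    exact dvd_mul_of_dvd_right ((mul_dvd_mul hdvd_sq_sub_one hdvd_sq_sub_four).trans
      (sub_one_mul_sub_four_dvd_prod_range _ hm)) _
  have hval := lt_padicValRat_pow_mul_div_factorial_two_mul (p := 3) (by norm_num)
    (mul_ne_zero (by positivity) hP) (m := m) (by omega) hdvd
  push_cast at hval ⊢
  omega

/-- Let `n ≥ 2` with `n ≡ ±1 (mod 6)` and `w = max (ν₃ (n - 1)) (ν₃ (n + 1)) ≥ 1`. Then for
every `m ≥ 3`, `ν₃ (T_n^{(m)}(1) * 3 ^ m / m!) ≥ w + 2` (with the convention that the claim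
also holds when the quantity vanishes). -/
theorem padicValRat_chebyshev_taylor_coeff (n : ℕ) (hn : 2 ≤ n)
    (hmod : n % 6 = 1 ∨ n % 6 = 5)
    (w : ℕ) (hw : w = max (padicValNat 3 (n - 1)) (padicValNat 3 (n + 1))) (hw1 : 1 ≤ w) :
    ∀ m : ℕ, 3 ≤ m →
      ((Polynomial.derivative)^[m] (T ℚ n)).eval 1 * 3 ^ m / (m.factorial : ℚ) = 0 ∨
      (w + 2 : ℤ) ≤ padicValRat 3
        (((Polynomial.derivative)^[m] (T ℚ n)).eval 1 * 3 ^ m / (m.factorial : ℚ)) :=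
  padicValRat_chebyshev_taylor_coeff_general n hmod w hw
end

section
/- Let n be an odd integer with n ≥ 3, w = max(ν_2(n-1), ν_2(n+1)), and let j be any integer. Then T_n(2j) ≡ 2j (mod 2^{w+1}). -/
open Polynomial Polynomial.Chebyshev

private lemma aux_pow_two_pow {R : Type*} [CommRing R] (x t : R) (a : ℕ) (ha : 1 ≤ a)
    (h : x = 1 + 2 ^ a * t) : ∀ i : ℕ, ∃ s : R, x ^ 2 ^ i = 1 + 2 ^ (a + i) * s := by
  intro i
  induction i with
  | zero => exact ⟨t, by simpa using h⟩
  | succ i ih =>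
    obtain ⟨s, hs⟩ := ih
    obtain ⟨b, hb⟩ : ∃ b, a + i = b + 1 := ⟨a + i - 1, by omega⟩
    refine ⟨s + 2 ^ b * s ^ 2, ?_⟩
    have hx : x ^ 2 ^ (i + 1) = (x ^ 2 ^ i) ^ 2 := by
      rw [← pow_mul, pow_succ]
    rw [hx, hs, hb, show a + (i+1) = b + 2 by omega]
    ring

private lemma cheb_aux (j : ℤ) (w N A B : ℕ) (hw2 : 2 ≤ w)
    (hA : 2 ^ w ∣ A) (hB : 2 ∣ B) (hN : 1 ≤ N)
    (hid : A = N - 1 ∧ B = N + 1 ∨ A = N + 1 ∧ B = N - 1) :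
    (2 ^ (w + 2) : ℤ) ∣ 2 * (T ℤ (N : ℤ)).eval (2 * j) - 4 * j := by
  set d : ℤ := 4 * j ^ 2 - 1 with hd
  set u : ℤ√d := ⟨2 * j, 1⟩ with hu
  set v : ℤ√d := ⟨2 * j, -1⟩ with hv
  have huv : u * v = 1 := by
    rw [Zsqrtd.ext_iff]
    simp [hu, hv, Zsqrtd.re_mul, Zsqrtd.im_mul, hd]
    ring
  have hsum : (4 : ℤ√d) * (j : ℤ√d) = u + v := by
    rw [Zsqrtd.ext_iff]
    simp [hu, hv]
    ring
  -- Chebyshev evaluation identity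
  have cheb : ∀ k : ℕ, ((2 * (T ℤ (k : ℤ)).eval (2 * j) : ℤ) : ℤ√d) = u ^ k + v ^ k := by
    intro k
    induction k using Nat.twoStepInduction with
    | zero => simp; norm_num
    | one =>
      simp only [Nat.cast_one, T_one, eval_X]
      push_cast
      linear_combination hsum
    | more k ih2 ih1 =>
      have hrec : 2 * (T ℤ ((k : ℤ) + 2)).eval (2 * j)
          = 4 * j * (2 * (T ℤ ((k : ℤ) + 1)).eval (2 * j)) - 2 * (T ℤ (k : ℤ)).eval (2 * j) := by
        rw [T_add_two]
        simp
        ring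
      rw [show ((k + 2 : ℕ) : ℤ) = (k : ℤ) + 2 by push_cast; ring, hrec]
      push_cast at ih1 ih2 ⊢
      linear_combination 4 * (j : ℤ√d) * ih1 - ih2 + (u ^ k + v ^ k) * huv
        + (u ^ (k + 1) + v ^ (k + 1)) * hsum
  -- the key algebraic identity
  have hp : ∀ a b : ℕ, u ^ (a + b) * v ^ b = u ^ a := by
    intro a b
    rw [pow_add, mul_assoc, ← mul_pow, huv, one_pow, mul_one]
  obtain ⟨K, hK⟩ : ∃ K, N = K + 1 := ⟨N - 1, by omega⟩
  have hident : u ^ N + v ^ N - (u + v)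
      = v ^ N * ((u ^ (N - 1) - 1) * (u ^ (N + 1) - 1)) := by
    subst hK
    simp only [Nat.add_sub_cancel]
    have e1 := hp (K + 1) (K + 1)
    have e3 := hp 1 (K + 1)
    have e4 : u ^ K * v ^ (K + 1) = v := by
      rw [pow_succ, ← mul_assoc, ← mul_pow, huv, one_pow, one_mul]
    linear_combination e3 + e4 - e1
  -- u² = 1 + 2c, u⁴ = 1 + 8e
  set c : ℤ√d := ⟨4 * j ^ 2 - 1, 2 * j⟩ with hc
  have hu2 : u ^ 2 = 1 + 2 * c := by
    rw [Zsqrtd.ext_iff]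
    constructor <;>
      simp [hu, hc, pow_two, Zsqrtd.re_mul, Zsqrtd.im_mul, hd] <;> ring
  have hce : c + c ^ 2 = 2 * (⟨(4*j^2-1)*(4*j^2), j + 2*j*(4*j^2-1)⟩ : ℤ√d) := by
    rw [Zsqrtd.ext_iff]
    constructor <;>
      simp [hc, pow_two, Zsqrtd.re_mul, Zsqrtd.im_mul, hd] <;> ring
  have hu4 : u ^ 4 = 1 + 2 ^ 3 * (⟨(4*j^2-1)*(4*j^2), j + 2*j*(4*j^2-1)⟩ : ℤ√d) := by
    linear_combination (u ^ 2 + 1 + 2 * c) * hu2 + 4 * hce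
  -- 2^(w+1) ∣ u^A - 1
  obtain ⟨s, hs⟩ := aux_pow_two_pow (u ^ 4) _ 3 (by norm_num) hu4 (w - 2)
  have h2w : (u ^ 4) ^ 2 ^ (w - 2) = u ^ 2 ^ w := by
    rw [← pow_mul]
    congr 1
    rw [show w = 2 + (w - 2) by omega, pow_add]
    norm_num
  rw [h2w, show 3 + (w - 2) = w + 1 by omega] at hs
  obtain ⟨q, hq⟩ := hA
  have hdivA : (2 : ℤ√d) ^ (w + 1) ∣ u ^ A - 1 := by
    have hA' : u ^ A = (u ^ 2 ^ w) ^ q := by rw [← pow_mul, hq]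
    rw [hA', hs]
    have h1 := sub_dvd_pow_sub_pow (1 + 2 ^ (w+1) * s) 1 q
    simp only [one_pow] at h1
    exact dvd_trans ⟨s, by ring⟩ h1
  have hdivB : (2 : ℤ√d) ∣ u ^ B - 1 := by
    obtain ⟨r, hr⟩ := hB
    have hB' : u ^ B = (u ^ 2) ^ r := by rw [← pow_mul, hr]
    rw [hB']
    have h1 := sub_dvd_pow_sub_pow (u ^ 2) 1 r
    simp only [one_pow] at h1
    exact dvd_trans ⟨c, by linear_combination hu2⟩ h1
  have hprod : (2 : ℤ√d) ^ (w + 2) ∣ (u ^ (N - 1) - 1) * (u ^ (N + 1) - 1) := by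
    rcases hid with ⟨ha, hb⟩ | ⟨ha, hb⟩
    · subst ha; subst hb
      rw [pow_succ]
      exact mul_dvd_mul hdivA hdivB
    · subst ha; subst hb
      rw [pow_succ, mul_comm (u ^ (N - 1) - 1)]
      exact mul_dvd_mul hdivA hdivB
  have hfin : (2 : ℤ√d) ^ (w + 2) ∣ u ^ N + v ^ N - (u + v) := by
    rw [hident]
    exact Dvd.dvd.mul_left hprod (v ^ N)
  have hcast : ((2 * (T ℤ (N : ℤ)).eval (2 * j) - 4 * j : ℤ) : ℤ√d)
      = u ^ N + v ^ N - (u + v) := by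
    have hcN := cheb N
    push_cast at hcN ⊢
    linear_combination hcN - hsum
  have hfin2 : ((2 ^ (w + 2) : ℤ) : ℤ√d) ∣ ((2 * (T ℤ (N : ℤ)).eval (2 * j) - 4 * j : ℤ) : ℤ√d) := by
    rw [hcast]
    push_cast
    exact hfin
  exact (Zsqrtd.intCast_dvd_intCast _ _).mp hfin2

/-- Let `n ≥ 3` be odd, `w = max (ν₂ (n - 1)) (ν₂ (n + 1))`, and `j` any integer. Then
`T_n(2j) ≡ 2j (mod 2 ^ (w + 1))`. -/
theorem chebyshev_eval_even_modeq (n : ℤ) (hn : 3 ≤ n) (hodd : Odd n)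
    (w : ℕ) (hw : w = max (padicValInt 2 (n - 1)) (padicValInt 2 (n + 1))) (j : ℤ) :
    (T ℤ n).eval (2 * j) ≡ 2 * j [ZMOD 2 ^ (w + 1)] := by
  haveI : Fact (Nat.Prime 2) := ⟨Nat.prime_two⟩
  have hmod : n % 4 = 1 ∨ n % 4 = 3 := by obtain ⟨k, hk⟩ := hodd; omega
  have hNn : ((n.toNat : ℤ)) = n := Int.toNat_of_nonneg (by omega)
  set N := n.toNat with hN
  have hN3 : 3 ≤ N := by omega
  have key : (2 ^ (w + 2) : ℤ) ∣ 2 * (T ℤ (N : ℤ)).eval (2 * j) - 4 * j := by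
    rcases hmod with h1 | h1
    · -- w = ν₂(n - 1), A = N - 1, B = N + 1
      have hv1 : 2 ≤ padicValInt 2 (n - 1) := by
        have hd4 : ((2:ℤ)) ^ 2 ∣ n - 1 := by norm_num; omega
        rcases (padicValInt_dvd_iff (p := 2) 2 (n - 1)).mp hd4 with h | h
        · omega
        · exact h
      have hv2 : padicValInt 2 (n + 1) ≤ 1 := by
        by_contra hcon
        push_neg at hcon
        have : ((2:ℤ)) ^ 2 ∣ n + 1 :=
          (padicValInt_dvd_iff (p := 2) 2 (n + 1)).mpr (Or.inr hcon)
        norm_num at this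
        omega
      have hwv : w = padicValInt 2 (n - 1) := by
        rw [hw, max_eq_left (le_trans hv2 (by omega))]
      have hw2 : 2 ≤ w := hwv ▸ hv1
      have hdvd : (2:ℤ) ^ w ∣ n - 1 := hwv ▸ padicValInt_dvd (n - 1)
      have hA : 2 ^ w ∣ N - 1 := by
        have hcast : (((N - 1 : ℕ)) : ℤ) = n - 1 := by
          omega
        rw [← Int.natCast_dvd_natCast]
        push_cast [hcast]
        exact hdvd
      have hB : 2 ∣ N + 1 := by omega
      exact cheb_aux j w N (N - 1) (N + 1) hw2 hA hB (by omega) (Or.inl ⟨rfl, rfl⟩)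
    · -- w = ν₂(n + 1), A = N + 1, B = N - 1
      have hv1 : 2 ≤ padicValInt 2 (n + 1) := by
        have hd4 : ((2:ℤ)) ^ 2 ∣ n + 1 := by norm_num; omega
        rcases (padicValInt_dvd_iff (p := 2) 2 (n + 1)).mp hd4 with h | h
        · omega
        · exact h
      have hv2 : padicValInt 2 (n - 1) ≤ 1 := by
        by_contra hcon
        push_neg at hcon
        have : ((2:ℤ)) ^ 2 ∣ n - 1 :=
          (padicValInt_dvd_iff (p := 2) 2 (n - 1)).mpr (Or.inr hcon)
        norm_num at this
        omega
      have hwv : w = padicValInt 2 (n + 1) := by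
        rw [hw, max_eq_right (le_trans hv2 (by omega))]
      have hw2 : 2 ≤ w := hwv ▸ hv1
      have hdvd : (2:ℤ) ^ w ∣ n + 1 := hwv ▸ padicValInt_dvd (n + 1)
      have hA : 2 ^ w ∣ N + 1 := by
        have hcast : (((N + 1 : ℕ)) : ℤ) = n + 1 := by push_cast [hNn]; ring
        rw [← Int.natCast_dvd_natCast]
        push_cast [hcast]
        exact hdvd
      have hB : 2 ∣ N - 1 := by omega
      exact cheb_aux j w N (N + 1) (N - 1) hw2 hA hB (by omega) (Or.inr ⟨rfl, rfl⟩)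
  have hdvd2 : (2 ^ (w + 1) : ℤ) ∣ (T ℤ n).eval (2 * j) - 2 * j := by
    obtain ⟨q, hq⟩ := key
    refine ⟨q, ?_⟩
    have h2 : (2:ℤ) * ((T ℤ n).eval (2 * j) - 2 * j) = 2 * (2 ^ (w + 1) * q) := by
      rw [← hNn]
      linear_combination hq
    have := mul_left_cancel₀ (two_ne_zero) h2
    exact this
  have := Int.modEq_iff_dvd.mpr (by simpa using (dvd_neg.mpr hdvd2))
  exact this
end

section
/- Let n be an odd integer with n ≡ ±1 (mod 3), h an integer, and w = max(ν_3(n-1), ν_3(n+1)). Then T_n(1 + 3h) ≡ 1 + 3h (mod 3^{w+1}) and T_n(-1 + 3h) ≡ -1 + 3h (mod 3^{w+1}). -/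
/-!
Adjoin `u = x + √(x² - 1)`, so that `u⁻¹ = x - √(x² - 1)` and `2 T_k(x) = uᵏ + u⁻ᵏ`. Then
`uᵏ⁺¹ (2 T_k(x) - 2x) = (uᵏ⁺¹ - 1)(uᵏ - u)`. For `x ≡ 1 (mod 3)` we have
`3 ∣ (u - 1)² = 2u(x - 1)`, so `u - 1` carries half a factor of `3`, and lifting the exponent
gives `3^w (u - 1) ∣ uᵃ - uᵇ` whenever `3^w ∣ a - b`. If `3^w ∣ k ± 1`, one factor is divisible
by `3^w (u - 1)` and the other by `u - 1`, so `3^(w+1) ∣ 2 (T_k(x) - x)`. For `x ≡ -1 (mod 3)`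
use `T_k(-x) = -T_k(x)`, `k` odd.
-/

open Polynomial Polynomial.Chebyshev

section ThreeAdic

variable {R : Type*} [CommRing R]

theorem three_mul_dvd_pow_three_sub_one {a d : R} (hd : d ∣ a - 1) (h3 : 3 ∣ (a - 1) ^ 2) :
    3 * d ∣ a ^ 3 - 1 := by
  have hfactor : a ^ 3 - 1 = (3 + 3 * (a - 1) + (a - 1) ^ 2) * (a - 1) := by ring
  rw [hfactor]
  exact mul_dvd_mul (dvd_add (dvd_add (dvd_refl 3) (dvd_mul_right 3 _)) h3) hd

theorem three_pow_mul_sub_one_dvd_pow_three_pow_mul_sub_one {u : R} (h3 : 3 ∣ (u - 1) ^ 2)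
    (w m : ℕ) : 3 ^ w * (u - 1) ∣ u ^ (3 ^ w * m) - 1 := by
  induction w with
  | zero => simpa using sub_one_dvd_pow_sub_one u m
  | succ w ih =>
    have hsq : 3 ∣ (u ^ (3 ^ w * m) - 1) ^ 2 :=
      h3.trans (pow_dvd_pow_of_dvd ((dvd_mul_left _ _).trans ih) 2)
    rw [pow_succ', mul_assoc, show 3 ^ (w + 1) * m = 3 ^ w * m * 3 by ring, pow_mul]
    exact three_mul_dvd_pow_three_sub_one ih hsq

theorem three_pow_mul_sub_one_dvd_pow_sub_pow {u : R} (h3 : 3 ∣ (u - 1) ^ 2) {w a b : ℕ}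
    (hab : (3 : ℤ) ^ w ∣ (a : ℤ) - b) : 3 ^ w * (u - 1) ∣ u ^ a - u ^ b := by
  wlog hba : b ≤ a generalizing a b
  · rw [← neg_sub (u ^ b)]
    exact (this (dvd_sub_comm.mp hab) (by omega)).neg_right
  obtain ⟨m, hm⟩ : 3 ^ w ∣ a - b := by
    rw [← Int.natCast_dvd_natCast, Nat.cast_sub hba]
    exact_mod_cast hab
  have hsplit : u ^ a - u ^ b = u ^ b * (u ^ (3 ^ w * m) - 1) := by
    rw [← hm, mul_sub, ← pow_add, Nat.add_sub_cancel' hba, mul_one]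
  rw [hsplit]
  exact (three_pow_mul_sub_one_dvd_pow_three_pow_mul_sub_one h3 w m).mul_left _

theorem three_pow_succ_dvd_pow_add_pow_sub_add {u v : R} (huv : u * v = 1)
    (h3 : 3 ∣ (u - 1) ^ 2) {w k : ℕ}
    (hk : (3 : ℤ) ^ w ∣ (k : ℤ) - 1 ∨ (3 : ℤ) ^ w ∣ (k : ℤ) + 1) :
    3 ^ (w + 1) ∣ u ^ k + v ^ k - (u + v) := by
  have hunit : IsUnit (u ^ (k + 1)) := (IsUnit.of_mul_eq_one v huv).pow _
  have hfactor : u ^ (k + 1) * (u ^ k + v ^ k - (u + v)) =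
      (u ^ (k + 1) - u ^ 0) * (u ^ k - u ^ 1) := by
    have hk : (u * v) ^ k = 1 := by rw [huv, one_pow]
    linear_combination u * hk - u ^ k * huv
  rw [← hunit.dvd_mul_left, hfactor]
  have hsq : 3 ^ (w + 1) ∣ 3 ^ w * (u - 1) * (u - 1) := by
    rw [pow_succ, mul_assoc, ← sq]
    exact mul_dvd_mul_left _ h3
  refine hsq.trans ?_
  have hone {a b : ℕ} : u - 1 ∣ u ^ a - u ^ b := by
    simpa using three_pow_mul_sub_one_dvd_pow_sub_pow h3 (w := 0) (a := a) (b := b) (by simp)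
  rcases hk with hk | hk
  · rw [mul_comm]
    exact mul_dvd_mul hone (three_pow_mul_sub_one_dvd_pow_sub_pow h3 (by simpa using hk))
  · exact mul_dvd_mul (three_pow_mul_sub_one_dvd_pow_sub_pow h3 (by simpa using hk)) hone

theorem two_mul_T_eval_eq_pow_add_pow {u v x : R} (huv : u * v = 1)
    (hx : 2 * x = u + v) (n : ℕ) : 2 * (T R n).eval x = u ^ n + v ^ n := by
  rw [← dickson_one_one_eval_add_inv u v huv, dickson_one_one_eq_chebyshev_C, ← hx]
  simpa using (congrArg (eval x) (C_comp_two_mul_X R n)).symm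

theorem three_pow_succ_dvd_two_mul_T_eval_sub {u v x : R}
    (huv : u * v = 1) (hx : 2 * x = u + v) (h3 : 3 ∣ x - 1) {w : ℕ} (k : ℕ)
    (hk : (3 : ℤ) ^ w ∣ (k : ℤ) - 1 ∨ (3 : ℤ) ^ w ∣ (k : ℤ) + 1) :
    3 ^ (w + 1) ∣ 2 * ((T R k).eval x - x) := by
  have hsq : (u - 1) ^ 2 = 2 * u * (x - 1) := by linear_combination (-u) * hx - huv
  rw [mul_sub, two_mul_T_eval_eq_pow_add_pow huv hx, hx]
  exact three_pow_succ_dvd_pow_add_pow_sub_add huv (hsq ▸ h3.mul_left _) hk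

end ThreeAdic

theorem three_pow_succ_dvd_T_eval_natCast_sub {x : ℤ} (h3 : 3 ∣ x - 1) {w : ℕ} (k : ℕ)
    (hk : (3 : ℤ) ^ w ∣ (k : ℤ) - 1 ∨ (3 : ℤ) ^ w ∣ (k : ℤ) + 1) :
    3 ^ (w + 1) ∣ (T ℤ k).eval x - x := by
  let u : ℤ√(x ^ 2 - 1) := ⟨x, 1⟩
  let v : ℤ√(x ^ 2 - 1) := ⟨x, -1⟩
  have huv : u * v = 1 := by ext <;> simp [u, v]; ring
  have hx : 2 * (x : ℤ√(x ^ 2 - 1)) = u + v := by ext <;> simp [u, v]; ring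
  have h3' : 3 ∣ (x : ℤ√(x ^ 2 - 1)) - 1 := by
    exact_mod_cast _root_.map_dvd (Int.castRingHom _) h3
  have hdvd := three_pow_succ_dvd_two_mul_T_eval_sub huv hx h3' k hk
  have hcast : (((T ℤ k).eval x : ℤ) : ℤ√(x ^ 2 - 1)) =
      (T _ k).eval (x : ℤ√(x ^ 2 - 1)) := by
    simpa using algebraMap_eval_T (R' := ℤ√(x ^ 2 - 1)) x k
  rw [← hcast] at hdvd
  have h2 : 3 ^ (w + 1) ∣ 2 * ((T ℤ k).eval x - x) := by
    rw [← Zsqrtd.intCast_dvd_intCast (d := x ^ 2 - 1)]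
    push_cast
    simpa using hdvd
  exact (IsCoprime.pow_left (by norm_num : IsCoprime (3 : ℤ) 2)).dvd_of_dvd_mul_left h2

theorem T_eval_modEq_self {x : ℤ} (h3 : 3 ∣ x - 1) {w : ℕ} (n : ℤ)
    (hn : (3 : ℤ) ^ w ∣ n - 1 ∨ (3 : ℤ) ^ w ∣ n + 1) :
    (T ℤ n).eval x ≡ x [ZMOD 3 ^ (w + 1)] := by
  refine (Int.modEq_iff_dvd.mpr ?_).symm
  obtain ⟨k, rfl | rfl⟩ := Int.eq_nat_or_neg n
  · exact three_pow_succ_dvd_T_eval_natCast_sub h3 k hn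
  · rw [T_neg]
    refine three_pow_succ_dvd_T_eval_natCast_sub h3 k (hn.symm.imp ?_ ?_) <;>
      intro h <;> simpa [add_comm, ← sub_eq_add_neg] using h.neg_right

theorem chebyshev_eval_near_pm_one_modeq_general (n : ℤ) (hodd : Odd n)
    (h : ℤ)
    (w : ℕ) (hw : w = max (padicValInt 3 (n - 1)) (padicValInt 3 (n + 1))) :
    (T ℤ n).eval (1 + 3 * h) ≡ 1 + 3 * h [ZMOD 3 ^ (w + 1)] ∧
    (T ℤ n).eval (-1 + 3 * h) ≡ -1 + 3 * h [ZMOD 3 ^ (w + 1)] := by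
  have hn : (3 : ℤ) ^ w ∣ n - 1 ∨ (3 : ℤ) ^ w ∣ n + 1 := by
    rcases max_choice (padicValInt 3 (n - 1)) (padicValInt 3 (n + 1)) with hmax | hmax <;>
      rw [hw, hmax]
    exacts [Or.inl (padicValInt_dvd _), Or.inr (padicValInt_dvd _)]
  have hnear_one (y : ℤ) : (T ℤ n).eval (1 + 3 * y) ≡ 1 + 3 * y [ZMOD 3 ^ (w + 1)] :=
    T_eval_modEq_self ⟨y, by ring⟩ n hn
  refine ⟨hnear_one h, ?_⟩
  rw [show -1 + 3 * h = -(1 + 3 * -h) by ring, T_eval_neg, Int.negOnePow_odd n hodd]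
  simpa using (hnear_one (-h)).neg

/-- Let `n` be odd with `n ≡ ±1 (mod 3)`, `h` any integer, and
`w = max (ν₃ (n - 1)) (ν₃ (n + 1))`. Then `T_n(1 + 3h) ≡ 1 + 3h (mod 3 ^ (w + 1))` and
`T_n(-1 + 3h) ≡ -1 + 3h (mod 3 ^ (w + 1))`. -/
theorem chebyshev_eval_near_pm_one_modeq (n : ℤ) (hn : 0 < n) (hodd : Odd n)
    (hmod : ¬ ((3 : ℤ) ∣ n)) (h : ℤ)
    (w : ℕ) (hw : w = max (padicValInt 3 (n - 1)) (padicValInt 3 (n + 1))) :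
    (T ℤ n).eval (1 + 3 * h) ≡ 1 + 3 * h [ZMOD 3 ^ (w + 1)] ∧
    (T ℤ n).eval (-1 + 3 * h) ≡ -1 + 3 * h [ZMOD 3 ^ (w + 1)] :=
  chebyshev_eval_near_pm_one_modeq_general n hodd h w hw
end
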